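/- arXiv:2102.09921 — 10 statements merged into one kernel-verified Lean document; each statement's English description precedes it below -/
import Mathlib

section
/- Every integer k has exactly one compact signed-digit representation: there is exactly one finitely supported sequence b : ℕ → {−1,0,1} such that b_i · b_{i+1} = 0 for all i ≥ 0 and Σ_{i≥0} b_i · 2^i = k. -/
/-!
The lowest digit of a compact representation of `k` is forced: modulo 4 the value is
`b₀ + 2 b₁`, and compactness makes `b₁ = 0` whenever `b₀ ≠ 0`, so `b₀` is `0` for even `k` and
otherwise the element of `{1, -1}` congruent to `k` modulo 4. Removing it leaves a compact
representation of `(k - b₀) / 2`. This gives uniqueness by induction on the position, and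
existence by induction on `|k|`: when `b₀ ≠ 0` the quotient is even, so the digit after `b₀` is
`0` as compactness requires.
-/

open Function

theorem finsum_nat_eq_zero_add {M : Type*} [AddCommMonoid M] {f : ℕ → M}
    (hf : f.HasFiniteSupport) : ∑ᶠ i, f i = f 0 + ∑ᶠ i, f (i + 1) := by
  rw [← add_finsum_cond_ne 0 hf, ← finsum_mem_range (f := f) Nat.succ_injective, Nat.range_succ]
  simp only [Set.mem_ofPred_eq, Nat.pos_iff_ne_zero]

noncomputable def ofSignedDigits (b : ℕ → ℤ) : ℤ := ∑ᶠ i, b i * 2 ^ i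

theorem ofSignedDigits_eq_add_two_mul {b : ℕ → ℤ} (hb : {i | b i ≠ 0}.Finite) :
    ofSignedDigits b = b 0 + 2 * ofSignedDigits (fun i => b (i + 1)) := by
  have hsupp : (fun i => b i * 2 ^ i).HasFiniteSupport :=
    hb.subset (support_mul_subset_left _ _)
  rw [ofSignedDigits, ofSignedDigits, finsum_nat_eq_zero_add hsupp, mul_finsum]
  simp only [pow_zero, mul_one, pow_succ, mul_left_comm (2 : ℤ), mul_comm (2 : ℤ)]

structure IsCompactSignedDigits (b : ℕ → ℤ) : Prop where
  mem : ∀ i, b i = -1 ∨ b i = 0 ∨ b i = 1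
  finite_support : {i | b i ≠ 0}.Finite
  mul_succ : ∀ i, b i * b (i + 1) = 0

def consDigit (d : ℤ) (b : ℕ → ℤ) : ℕ → ℤ
  | 0 => d
  | i + 1 => b i

theorem finite_support_consDigit {d : ℤ} {b : ℕ → ℤ} (hb : {i | b i ≠ 0}.Finite) :
    {i | consDigit d b i ≠ 0}.Finite := by
  refine ((hb.image Nat.succ).insert 0).subset ?_
  rintro (_ | i) hi
  · exact Set.mem_insert 0 _
  · exact Set.mem_insert_of_mem 0 ⟨i, hi, rfl⟩

theorem ofSignedDigits_consDigit {d : ℤ} {b : ℕ → ℤ} (hb : {i | b i ≠ 0}.Finite) :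
    ofSignedDigits (consDigit d b) = d + 2 * ofSignedDigits b :=
  ofSignedDigits_eq_add_two_mul (finite_support_consDigit hb)

namespace IsCompactSignedDigits

variable {b c : ℕ → ℤ}

theorem zero : IsCompactSignedDigits 0 :=
  ⟨fun _ => Or.inr (Or.inl rfl), by simp, fun _ => zero_mul _⟩

theorem tail (hb : IsCompactSignedDigits b) : IsCompactSignedDigits (fun i => b (i + 1)) :=
  ⟨fun i => hb.mem (i + 1), hb.finite_support.preimage Nat.succ_injective.injOn,
    fun i => hb.mul_succ (i + 1)⟩

theorem consDigit {d : ℤ} (hd : d = -1 ∨ d = 0 ∨ d = 1) (hb : IsCompactSignedDigits b)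
    (hdb : d * b 0 = 0) : IsCompactSignedDigits (consDigit d b) := by
  refine ⟨?_, finite_support_consDigit hb.finite_support, ?_⟩
  · rintro (_ | i)
    exacts [hd, hb.mem i]
  · rintro (_ | i)
    exacts [hdb, hb.mul_succ i]

theorem ofSignedDigits_eq_add_four_mul (hb : IsCompactSignedDigits b) :
    ofSignedDigits b = b 0 + 2 * b 1 + 4 * ofSignedDigits (fun i => b (i + 2)) := by
  rw [ofSignedDigits_eq_add_two_mul hb.finite_support,
    ofSignedDigits_eq_add_two_mul hb.tail.finite_support]
  ring

theorem head_eq_zero_of_two_dvd (hb : IsCompactSignedDigits b) (h : 2 ∣ ofSignedDigits b) :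
    b 0 = 0 := by
  have := ofSignedDigits_eq_add_two_mul hb.finite_support
  have := hb.mem 0
  omega

theorem head_eq_of_ofSignedDigits_eq (hb : IsCompactSignedDigits b)
    (hc : IsCompactSignedDigits c) (h : ofSignedDigits b = ofSignedDigits c) : b 0 = c 0 := by
  have hb₂ := hb.ofSignedDigits_eq_add_four_mul
  have hc₂ := hc.ofSignedDigits_eq_add_four_mul
  have hb₀₁ : b 0 = 0 ∨ b 1 = 0 := mul_eq_zero.1 (hb.mul_succ 0)
  have hc₀₁ : c 0 = 0 ∨ c 1 = 0 := mul_eq_zero.1 (hc.mul_succ 0)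
  have := hb.mem 0; have := hb.mem 1; have := hc.mem 0; have := hc.mem 1
  omega

theorem eq_of_ofSignedDigits_eq (hb : IsCompactSignedDigits b) (hc : IsCompactSignedDigits c)
    (h : ofSignedDigits b = ofSignedDigits c) : b = c := by
  funext i
  induction i generalizing b c with
  | zero => exact hb.head_eq_of_ofSignedDigits_eq hc h
  | succ i ih =>
    have h₀ := hb.head_eq_of_ofSignedDigits_eq hc h
    have hb₁ := ofSignedDigits_eq_add_two_mul hb.finite_support
    have hc₁ := ofSignedDigits_eq_add_two_mul hc.finite_support
    refine ih hb.tail hc.tail ?_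
    omega

end IsCompactSignedDigits

theorem exists_signedDigit_sub_dvd (k : ℤ) :
    ∃ d : ℤ, (d = -1 ∨ d = 0 ∨ d = 1) ∧ 2 ∣ k - d ∧ (d ≠ 0 → 4 ∣ k - d) := by
  rcases (by omega : k % 4 = 0 ∨ k % 4 = 1 ∨ k % 4 = 2 ∨ k % 4 = 3) with h | h | h | h
  exacts [⟨0, by omega⟩, ⟨1, by omega⟩, ⟨0, by omega⟩, ⟨-1, by omega⟩]

theorem exists_isCompactSignedDigits_ofSignedDigits_eq (k : ℤ) :
    ∃ b, IsCompactSignedDigits b ∧ ofSignedDigits b = k := by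
  by_cases hk : k = 0
  · exact ⟨0, .zero, by simp [hk, ofSignedDigits]⟩
  obtain ⟨d, hd, hd₂, hd₄⟩ := exists_signedDigit_sub_dvd k
  obtain ⟨b, hb, hbk⟩ := exists_isCompactSignedDigits_ofSignedDigits_eq ((k - d) / 2)
  have hdb : d * b 0 = 0 := by
    rcases eq_or_ne d 0 with rfl | hd0
    · exact zero_mul _
    · rw [hb.head_eq_zero_of_two_dvd (by omega), mul_zero]
  refine ⟨consDigit d b, hb.consDigit hd hdb, ?_⟩
  rw [ofSignedDigits_consDigit hb.finite_support, hbk]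
  omega
termination_by k.natAbs
decreasing_by omega

/-- Every integer `k` has exactly one compact signed-digit
representation: a finitely supported sequence `b : ℕ → {−1,0,1}` with
`b i * b (i+1) = 0` for all `i` and `∑ᶠ i, b i * 2 ^ i = k`. -/
theorem exists_unique_compact_signed_digit_representation (k : ℤ) :
    ∃! b : ℕ → ℤ,
      (∀ i, b i = -1 ∨ b i = 0 ∨ b i = 1) ∧
      {i | b i ≠ 0}.Finite ∧
      (∀ i, b i * b (i + 1) = 0) ∧
      ∑ᶠ i, b i * 2 ^ i = k := by
  obtain ⟨b, hb, rfl⟩ := exists_isCompactSignedDigits_ofSignedDigits_eq k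
  refine ⟨b, ⟨hb.mem, hb.finite_support, hb.mul_succ, rfl⟩, ?_⟩
  rintro c ⟨hmem, hfin, hmul, hc⟩
  exact IsCompactSignedDigits.eq_of_ofSignedDigits_eq ⟨hmem, hfin, hmul⟩ hb hc
end

section
/- For all k ≥ 0, the integer identity a_k + c_k = b_k + 2 · c_{k+1} holds (where the Boolean values a_k, c_k, c_{k+1} ∈ {0,1} are read as integers). -/
/-- The carry sequence: `c i = ⋁_{1 ≤ j ≤ i} ((a j ∧ a (j-1)) ∧ ⋀_{j < k ≤ i} (a k ∨ a (k-1)))`. -/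
noncomputable def carry (a : ℕ → Bool) (i : ℕ) : Bool :=
  (Finset.Icc 1 i).sup fun j =>
    (a j && a (j - 1)) && (Finset.Ioc j i).inf fun k => a k || a (k - 1)

/-- The output digits: `b i = (a i ⊕ c i) · (−1)^{a (i+1)}`. -/
noncomputable def digit (a : ℕ → Bool) (i : ℕ) : ℤ :=
  ((Bool.xor (a i) (carry a i)).toNat : ℤ) * (-1) ^ (a (i + 1)).toNat

/-- Recurrence for the carry: `c (k+1) = (a (k+1) ∧ a k) ∨ ((a (k+1) ∨ a k) ∧ c k)`. -/
lemma carry_succ (a : ℕ → Bool) (k : ℕ) :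
    carry a (k + 1) = ((a (k + 1) && a k) || ((a (k + 1) || a k) && carry a k)) := by
  unfold carry
  rw [show Finset.Icc 1 (k + 1) = insert (k + 1) (Finset.Icc 1 k) by
    ext x; simp [Finset.mem_Icc]; omega]
  rw [Finset.sup_insert]
  have h1 : Finset.Ioc (k + 1) (k + 1) = ∅ := by simp
  have h2 : ∀ j ∈ Finset.Icc 1 k,
      ((a j && a (j - 1)) && (Finset.Ioc j (k + 1)).inf fun i => a i || a (i - 1))
        = ((a (k + 1) || a k) && ((a j && a (j - 1)) && (Finset.Ioc j k).inf fun i => a i || a (i - 1))) := by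
    intro j hj
    simp only [Finset.mem_Icc] at hj
    rw [show Finset.Ioc j (k + 1) = insert (k + 1) (Finset.Ioc j k) by
      ext x; simp [Finset.mem_Ioc]; omega]
    rw [Finset.inf_insert]
    simp only [Nat.add_sub_cancel, ← Bool.inf_eq_band]
    generalize (Finset.Ioc j k).inf (fun i => a i || a (i - 1)) = s
    cases a (k+1) <;> cases a k <;> cases a j <;> cases a (j-1) <;> cases s <;> rfl
  rw [Finset.sup_congr rfl h2]
  have := Finset.sup_inf_distrib_left (Finset.Icc 1 k)
    (fun j => (a j && a (j - 1)) && (Finset.Ioc j k).inf fun i => a i || a (i - 1))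
    (a (k + 1) || a k)
  simp only [← Bool.inf_eq_band, ← Bool.sup_eq_bor] at this ⊢
  rw [← this, h1]
  simp

/-- For all `k ≥ 0` the integer identity
`a k + c k = b k + 2 · c (k+1)` holds (Booleans read as integers). -/
theorem digit_carry_identity (m : ℕ) (a : ℕ → Bool) (ha : ∀ i, m ≤ i → a i = false) :
    ∀ k : ℕ, ((a k).toNat : ℤ) + ((carry a k).toNat : ℤ)
      = digit a k + 2 * ((carry a (k + 1)).toNat : ℤ) := by
  intro k
  rw [digit, carry_succ]
  cases a k <;> cases a (k + 1) <;> cases carry a k <;> simp [*]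
end

section
/- Let A be any compact signed-digit representation and let n ≥ 1 and B = (b_0,…,b_{n−1}) be the alternating compact signed-digit representation with b_i = (n − i) mod 2 for 0 ≤ i ≤ n−1. Then val(A) ≤ val(B) if and only if val(A) ≤ 0 or the digit-length of A is at most n. -/
private lemma abs_helper {X C : ℤ} (h1 : -C ≤ 3 * X) (h2 : 3 * X ≤ C) : 3 * |X| ≤ C := by
  rcases abs_cases X with ⟨he, _⟩ | ⟨he, _⟩ <;> rw [he] <;> linarith

/-- Key bound: any compact signed-digit number with digits below `m` satisfies
`3 * |val| ≤ 2 ^ (m+1) - 1`. -/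
lemma compact_key (a : ℕ → ℤ) (hdig : ∀ i, a i = -1 ∨ a i = 0 ∨ a i = 1)
    (hcomp : ∀ i, a i * a (i + 1) = 0) :
    ∀ m, 3 * |∑ i ∈ Finset.range m, a i * 2 ^ i| ≤ 2 ^ (m + 1) - 1 := by
  intro m
  induction m using Nat.strong_induction_on with
  | _ m ih =>
    match m, ih with
    | 0, _ => simp
    | 1, _ =>
      simp only [Finset.sum_range_one, pow_zero, mul_one]
      rcases hdig 0 with h | h | h <;> simp [h]
    | (m + 2), ih =>
      have hsum : ∑ i ∈ Finset.range (m + 2), a i * 2 ^ i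
          = (∑ i ∈ Finset.range m, a i * 2 ^ i) + a m * 2 ^ m + a (m + 1) * 2 ^ (m + 1) := by
        rw [Finset.sum_range_succ, Finset.sum_range_succ]
      have hpow : (2 : ℤ) ^ (m + 3) = 4 * 2 ^ (m + 1) := by ring
      set S := ∑ i ∈ Finset.range m, a i * 2 ^ i with hS
      rcases hdig (m + 1) with h | h | h
      · have h0 : a m = 0 := by have := hcomp m; rw [h] at this; linarith
        have ihm := ih m (by omega)
        have hb1 := le_abs_self S
        have hb2 := neg_abs_le S
        rw [hsum, h, h0]
        apply abs_helper <;> [skip; skip] <;> nlinarith [ihm, hb1, hb2]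
      · have ihm := ih (m + 1) (by omega)
        have heq : ∑ i ∈ Finset.range (m + 2), a i * 2 ^ i
            = ∑ i ∈ Finset.range (m + 1), a i * 2 ^ i := by
          rw [Finset.sum_range_succ, h]; ring
        rw [heq]
        have hp : (0 : ℤ) < 2 ^ (m + 2) := by positivity
        have : (2 : ℤ) ^ (m + 3) = 2 * 2 ^ (m + 2) := by ring
        linarith
      · have h0 : a m = 0 := by have := hcomp m; rw [h] at this; linarith
        have ihm := ih m (by omega)
        have hb1 := le_abs_self S
        have hb2 := neg_abs_le S
        rw [hsum, h, h0]
        apply abs_helper <;> nlinarith [ihm, hb1, hb2]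

/-- Value of the alternating representation. -/
lemma alt_val : ∀ n : ℕ,
    3 * ∑ i ∈ Finset.range n, (((n - i) % 2 : ℕ) : ℤ) * 2 ^ i
      = 2 ^ (n + 1) - 2 + (n % 2 : ℕ) := by
  intro n
  induction n using Nat.strong_induction_on with
  | _ n ih =>
    match n, ih with
    | 0, _ => simp
    | 1, _ => norm_num
    | (n + 2), ih =>
      have ihn := ih n (by omega)
      have hcongr : ∑ i ∈ Finset.range n, (((n + 2 - i) % 2 : ℕ) : ℤ) * 2 ^ i
          = ∑ i ∈ Finset.range n, (((n - i) % 2 : ℕ) : ℤ) * 2 ^ i := by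
        refine Finset.sum_congr rfl fun i hi => ?_
        have hi' : i < n := Finset.mem_range.mp hi
        have : n + 2 - i = n - i + 2 := by omega
        rw [this, Nat.add_mod_right]
      rw [Finset.sum_range_succ, Finset.sum_range_succ, hcongr]
      have e1 : n + 2 - (n + 1) = 1 := by omega
      have e2 : n + 2 - n = 2 := by omega
      have e3 : (n + 2) % 2 = n % 2 := Nat.add_mod_right n 2
      rw [e1, e2, e3]
      have hpow : (2 : ℤ) ^ (n + 2 + 1) = 4 * 2 ^ (n + 1) := by ring
      have c1 : ((1 % 2 : ℕ) : ℤ) = 1 := by norm_num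
      have c2 : ((2 % 2 : ℕ) : ℤ) = 0 := by norm_num
      rw [c1, c2]
      linarith

/-- Let `A` be a compact signed-digit representation (digits in
`{−1,0,1}`, finitely supported, no two consecutive digits nonzero), and let `B` be the
alternating compact representation `b i = (n − i) mod 2` for `i < n` (with `n ≥ 1`).
Then `val A ≤ val B` iff `val A ≤ 0` or the digit-length of `A` is at most `n`
(i.e. `a i = 0` for all `i ≥ n`). -/
theorem compact_le_alternating_iff (n : ℕ) (hn : 1 ≤ n) (a : ℕ → ℤ)
    (hdig : ∀ i, a i = -1 ∨ a i = 0 ∨ a i = 1)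
    (hfin : {i | a i ≠ 0}.Finite)
    (hcomp : ∀ i, a i * a (i + 1) = 0) :
    (∑ᶠ i, a i * 2 ^ i) ≤ ∑ i ∈ Finset.range n, (((n - i) % 2 : ℕ) : ℤ) * 2 ^ i ↔
      ((∑ᶠ i, a i * 2 ^ i) ≤ 0 ∨ ∀ i, n ≤ i → a i = 0) := by
  set B := ∑ i ∈ Finset.range n, (((n - i) % 2 : ℕ) : ℤ) * 2 ^ i with hBdef
  have hB3 : 3 * B = 2 ^ (n + 1) - 2 + (n % 2 : ℕ) := alt_val n
  have hmod : (n % 2 : ℕ) ≤ 1 := by omega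
  have hmodZ : ((n % 2 : ℕ) : ℤ) ≤ 1 := by exact_mod_cast hmod
  have hpn : (4 : ℤ) ≤ 2 ^ (n + 1) := by
    calc (4 : ℤ) = 2 ^ 2 := by norm_num
    _ ≤ 2 ^ (n + 1) := pow_le_pow_right₀ (by norm_num) (by omega)
  have hBpos : 0 < B := by
    have : ((n % 2 : ℕ) : ℤ) ≥ 0 := Int.natCast_nonneg _
    linarith
  constructor
  · intro hle
    by_contra hcon
    push_neg at hcon
    obtain ⟨hpos, j, hjn, hja⟩ := hcon
    -- the support is nonempty
    have hne : hfin.toFinset.Nonempty := ⟨j, by simp [Set.Finite.mem_toFinset]; exact hja⟩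
    set J := hfin.toFinset.max' hne with hJdef
    have hJmem : a J ≠ 0 := by
      have := hfin.toFinset.max'_mem hne
      simpa [Set.Finite.mem_toFinset] using this
    have hJn : n ≤ J := le_trans hjn (hfin.toFinset.le_max' j (by simp [Set.Finite.mem_toFinset]; exact hja))
    have hJtop : ∀ i, J < i → a i = 0 := by
      intro i hi
      by_contra hai
      have : i ≤ J := hfin.toFinset.le_max' i (by simp [Set.Finite.mem_toFinset]; exact hai)
      omega
    have hval : (∑ᶠ i, a i * 2 ^ i) = ∑ i ∈ Finset.range (J + 1), a i * 2 ^ i := by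
      apply finsum_eq_sum_of_support_subset
      intro i hi
      simp only [Function.mem_support] at hi
      have : a i ≠ 0 := fun h => hi (by rw [h]; ring)
      have : i ≤ J := by by_contra hc; exact this (hJtop i (by omega))
      simp [Finset.mem_range]; omega
    obtain ⟨K, hK⟩ : ∃ K, J = K + 1 := ⟨J - 1, by omega⟩
    have hK0 : a K = 0 := by
      have := hcomp K
      rw [← hK] at this
      rcases mul_eq_zero.mp this with h | h
      · exact h
      · exact absurd h hJmem
    have hsum : ∑ i ∈ Finset.range (J + 1), a i * 2 ^ i
        = (∑ i ∈ Finset.range K, a i * 2 ^ i) + a J * 2 ^ J := by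
      rw [hK, Finset.sum_range_succ, Finset.sum_range_succ, hK0]
      ring
    set S := ∑ i ∈ Finset.range K, a i * 2 ^ i with hSdef
    have hkey := compact_key a hdig hcomp K
    have hb1 := le_abs_self S
    have hb2 := neg_abs_le S
    have hKJ : (2 : ℤ) ^ (K + 1) = 2 ^ J := by rw [hK]
    have hJpow : (2 : ℤ) ^ (n + 1) ≤ 2 ^ (J + 1) :=
      pow_le_pow_right₀ (by norm_num) (by omega)
    have hJpow2 : (2 : ℤ) ^ (J + 1) = 2 * 2 ^ J := by ring
    rcases hdig J with h | h | h
    · -- top digit -1 : value negative, contradiction with hpos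
      rw [hval, hsum, h] at hpos
      have hJp : (0 : ℤ) < 2 ^ J := by positivity
      nlinarith
    · exact hJmem h
    · -- top digit 1 : value too large, contradiction with hle
      rw [hval, hsum, h] at hle
      have h3 : 3 * (S + 1 * 2 ^ J) ≥ 2 ^ (J + 1) + 1 := by nlinarith
      have : 3 * (S + 1 * 2 ^ J) ≤ 3 * B := by linarith
      have hcast : (0 : ℤ) ≤ ((n % 2 : ℕ) : ℤ) := Int.natCast_nonneg _
      linarith
  · intro h
    rcases h with h | h
    · linarith
    · have hval : (∑ᶠ i, a i * 2 ^ i) = ∑ i ∈ Finset.range n, a i * 2 ^ i := by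
        apply finsum_eq_sum_of_support_subset
        intro i hi
        simp only [Function.mem_support] at hi
        have hai : a i ≠ 0 := fun hh => hi (by rw [hh]; ring)
        have : i < n := by by_contra hc; exact hai (h i (by omega))
        simpa [Finset.mem_range]
      rw [hval]
      have hkey := compact_key a hdig hcomp n
      have hb1 := le_abs_self (∑ i ∈ Finset.range n, a i * 2 ^ i)
      have h3 : 3 * (∑ i ∈ Finset.range n, a i * 2 ^ i) ≤ 3 * B + 1 := by
        have hcast : (0 : ℤ) ≤ ((n % 2 : ℕ) : ℤ) := Int.natCast_nonneg _
        linarith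
      omega
end

section
/- For every compact signed-digit representation A of digit-length at most n, one has −⌊2^{n+1}/3⌋ ≤ val(A) ≤ ⌊2^{n+1}/3⌋, i.e., |val(A)| ≤ ⌊2^{n+1}/3⌋. -/
lemma compact_value_abs_le_aux (a : ℕ → ℤ)
    (hdig : ∀ i, a i = -1 ∨ a i = 0 ∨ a i = 1)
    (hcomp : ∀ i, a i * a (i + 1) = 0) :
    ∀ n : ℕ, |∑ i ∈ Finset.range n, a i * 2 ^ i| ≤ 2 ^ (n + 1) / 3
  | 0 => by simp
  | 1 => by
    simp only [Finset.range_one, Finset.sum_singleton, pow_zero, mul_one]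
    rcases hdig 0 with h | h | h <;> simp [h]
  | (k + 2) => by
    rw [Finset.sum_range_succ]
    by_cases h : a (k + 1) = 0
    · rw [h, zero_mul, add_zero]
      calc |∑ i ∈ Finset.range (k + 1), a i * 2 ^ i| ≤ 2 ^ (k + 2) / 3 :=
            compact_value_abs_le_aux a hdig hcomp (k + 1)
        _ ≤ 2 ^ (k + 3) / 3 := by
            apply Int.ediv_le_ediv (by norm_num)
            exact pow_le_pow_right₀ (by norm_num) (by omega)
    · have hk : a k = 0 := by
        rcases mul_eq_zero.1 (hcomp k) with h' | h'
        · exact h'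
        · exact absurd h' h
      rw [Finset.sum_range_succ, hk, zero_mul, add_zero]
      have h1 : |∑ i ∈ Finset.range k, a i * 2 ^ i| ≤ 2 ^ (k + 1) / 3 :=
        compact_value_abs_le_aux a hdig hcomp k
      have h2 : |a (k + 1) * 2 ^ (k + 1)| ≤ 2 ^ (k + 1) := by
        rw [abs_mul, abs_pow]
        rcases hdig (k + 1) with h' | h' | h' <;> simp [h']
      have h3 : (2 : ℤ) ^ (k + 3) / 3 = 2 ^ (k + 1) / 3 + 2 ^ (k + 1) := by
        have : (2 : ℤ) ^ (k + 3) = 2 ^ (k + 1) + 2 ^ (k + 1) * 3 := by ring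
        rw [this, Int.add_mul_ediv_right _ _ (by norm_num)]
      calc |∑ i ∈ Finset.range k, a i * 2 ^ i + a (k + 1) * 2 ^ (k + 1)|
          ≤ |∑ i ∈ Finset.range k, a i * 2 ^ i| + |a (k + 1) * 2 ^ (k + 1)| := abs_add_le _ _
        _ ≤ 2 ^ (k + 1) / 3 + 2 ^ (k + 1) := add_le_add h1 h2
        _ = 2 ^ (k + 3) / 3 := h3.symm

/-- Every compact signed-digit representation `A` of digit-length at
most `n` satisfies `|val A| ≤ ⌊2^{n+1}/3⌋`. -/
theorem compact_value_abs_le (n : ℕ) (a : ℕ → ℤ)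
    (hdig : ∀ i, a i = -1 ∨ a i = 0 ∨ a i = 1)
    (hcomp : ∀ i, a i * a (i + 1) = 0)
    (hlen : ∀ i, n ≤ i → a i = 0) :
    |∑ i ∈ Finset.range n, a i * 2 ^ i| ≤ 2 ^ (n + 1) / 3 :=
  compact_value_abs_le_aux a hdig hcomp n
end

section
/- Let A = (a_0,…,a_{m−1}) and B = (b_0,…,b_{m−1}) be compact signed-digit representations. Then val(A) = val(B) if and only if a_i = b_i for all 0 ≤ i ≤ m−1. -/
private lemma compact_aux : ∀ (m : ℕ) (a b : ℕ → ℤ),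
    (∀ i < m, a i = -1 ∨ a i = 0 ∨ a i = 1) →
    (∀ i < m, b i = -1 ∨ b i = 0 ∨ b i = 1) →
    (∀ i, i + 1 < m → a i * a (i + 1) = 0) →
    (∀ i, i + 1 < m → b i * b (i + 1) = 0) →
    (∑ i ∈ Finset.range m, a i * 2 ^ i = ∑ i ∈ Finset.range m, b i * 2 ^ i) →
    ∀ i < m, a i = b i := by
  intro m
  induction m with
  | zero => intro a b _ _ _ _ _ i hi; omega
  | succ k ih =>
    intro a b hda hdb hca hcb hsum
    have ea : ∑ i ∈ Finset.range (k+1), a i * 2 ^ i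
        = a 0 + 2 * ∑ i ∈ Finset.range k, a (i+1) * 2 ^ i := by
      rw [Finset.sum_range_succ', Finset.mul_sum]
      simp only [pow_zero, mul_one, pow_succ]
      rw [add_comm]
      congr 1
      apply Finset.sum_congr rfl
      intros; ring
    have eb : ∑ i ∈ Finset.range (k+1), b i * 2 ^ i
        = b 0 + 2 * ∑ i ∈ Finset.range k, b (i+1) * 2 ^ i := by
      rw [Finset.sum_range_succ', Finset.mul_sum]
      simp only [pow_zero, mul_one, pow_succ]
      rw [add_comm]
      congr 1
      apply Finset.sum_congr rfl
      intros; ring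
    set S := ∑ i ∈ Finset.range k, a (i+1) * 2 ^ i with hS
    set T := ∑ i ∈ Finset.range k, b (i+1) * 2 ^ i with hT
    rw [ea, eb] at hsum
    have hdvd : a 0 ≠ 0 → b 0 ≠ 0 → (2:ℤ) ∣ (S - T) := by
      intro ha0 hb0
      rcases Nat.eq_zero_or_pos k with hk | hk
      · subst hk; simp [hS, hT]
      · have ha1 : a 1 = 0 := by
          have h := hca 0 (by omega)
          rcases mul_eq_zero.mp h with h | h
          · exact absurd h ha0
          · exact h
        have hb1 : b 1 = 0 := by
          have h := hcb 0 (by omega)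
          rcases mul_eq_zero.mp h with h | h
          · exact absurd h hb0
          · exact h
        have h2S : (2:ℤ) ∣ S := by
          apply Finset.dvd_sum
          intro i _
          match i with
          | 0 => simp [ha1]
          | Nat.succ j =>
            exact Dvd.dvd.mul_left (dvd_pow_self 2 (Nat.succ_ne_zero j)) _
        have h2T : (2:ℤ) ∣ T := by
          apply Finset.dvd_sum
          intro i _
          match i with
          | 0 => simp [hb1]
          | Nat.succ j =>
            exact Dvd.dvd.mul_left (dvd_pow_self 2 (Nat.succ_ne_zero j)) _
        exact dvd_sub h2S h2T
    have h0 : a 0 = b 0 := by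
      rcases hda 0 (by omega) with h1 | h1 | h1 <;>
        rcases hdb 0 (by omega) with h2 | h2 | h2 <;>
        omega
    have hST : S = T := by omega
    have hrest := ih (fun i => a (i+1)) (fun i => b (i+1))
      (fun i hi => hda (i+1) (by omega))
      (fun i hi => hdb (i+1) (by omega))
      (fun i hi => hca (i+1) (by omega))
      (fun i hi => hcb (i+1) (by omega))
      hST
    intro i hi
    match i with
    | 0 => exact h0
    | Nat.succ j => exact hrest j (by omega)

/-- Two compact signed-digit representations `A = (a_0,…,a_{m−1})` and
`B = (b_0,…,b_{m−1})` have the same value iff they agree digit-wise. -/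
theorem compact_value_eq_iff (m : ℕ) (a b : ℕ → ℤ)
    (hda : ∀ i < m, a i = -1 ∨ a i = 0 ∨ a i = 1)
    (hdb : ∀ i < m, b i = -1 ∨ b i = 0 ∨ b i = 1)
    (hca : ∀ i, i + 1 < m → a i * a (i + 1) = 0)
    (hcb : ∀ i, i + 1 < m → b i * b (i + 1) = 0) :
    (∑ i ∈ Finset.range m, a i * 2 ^ i = ∑ i ∈ Finset.range m, b i * 2 ^ i) ↔
      ∀ i < m, a i = b i := by
  constructor
  · exact compact_aux m a b hda hdb hca hcb
  · intro h
    apply Finset.sum_congr rfl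
    intro i hi
    rw [h i (Finset.mem_range.mp hi)]
end

section
/- Let A = (a_0,…,a_{m−1}) and B = (b_0,…,b_{m−1}) be compact signed-digit representations and assume there is some i with a_i ≠ b_i; let i_0 = max{ i < m : a_i ≠ b_i }. Then val(A) < val(B) if and only if a_{i_0} < b_{i_0}. -/
lemma sd_bound (a : ℕ → ℤ) :
    ∀ n, (∀ i < n, a i = -1 ∨ a i = 0 ∨ a i = 1) →
      (∀ i, i + 1 < n → a i * a (i + 1) = 0) →
      3 * |∑ i ∈ Finset.range n, a i * 2 ^ i| ≤ 2 ^ (n + 1) - 1 := by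
  intro n
  induction n using Nat.strong_induction_on with
  | _ n ih =>
    intro hd hc
    match n with
    | 0 => simp
    | 1 =>
      simp only [Finset.range_one, Finset.sum_singleton, pow_zero, mul_one]
      rcases hd 0 (by norm_num) with h | h | h <;> rw [h] <;> norm_num
    | (k+2) =>
      by_cases h : a (k+1) = 0
      · rw [Finset.sum_range_succ, h]
        simp only [zero_mul, add_zero]
        have hih := ih (k+1) (by omega) (fun i hi => hd i (by omega))
          (fun i hi => hc i (by omega))
        have h2 : (2:ℤ)^(k+2) ≤ 2^(k+3) := by
          apply pow_le_pow_right₀ <;> norm_num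
        linarith
      · have h0 : a k = 0 := by
          rcases mul_eq_zero.mp (hc k (by omega)) with h1 | h1
          · exact h1
          · exact absurd h1 h
        rw [Finset.sum_range_succ, Finset.sum_range_succ, h0]
        have ihk := ih k (by omega) (fun i hi => hd i (by omega))
          (fun i hi => hc i (by omega))
        have ha1 : |a (k+1)| ≤ 1 := by
          rcases hd (k+1) (by omega) with h' | h' | h' <;> rw [h'] <;> norm_num
        have habs : |∑ i ∈ Finset.range k, a i * 2 ^ i + 0 * 2 ^ k + a (k+1) * 2^(k+1)|
            ≤ |∑ i ∈ Finset.range k, a i * 2 ^ i| + 2^(k+1) := by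
          calc |∑ i ∈ Finset.range k, a i * 2 ^ i + 0 * 2 ^ k + a (k+1) * 2^(k+1)|
              ≤ |∑ i ∈ Finset.range k, a i * 2 ^ i + 0 * 2 ^ k| + |a (k+1) * 2^(k+1)| :=
                abs_add_le _ _
            _ ≤ |∑ i ∈ Finset.range k, a i * 2 ^ i| + 2^(k+1) := by
                rw [abs_mul, abs_pow]
                simp only [zero_mul, add_zero, abs_two]
                nlinarith [pow_pos (by norm_num : (0:ℤ) < 2) (k+1)]
        have hp : (2:ℤ)^(k+3) = 4 * 2^(k+1) := by ring
        linarith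

lemma sd_bound' (a : ℕ → ℤ) (m i0 : ℕ) (hi0 : i0 < m)
    (hd : ∀ i < m, a i = -1 ∨ a i = 0 ∨ a i = 1)
    (hc : ∀ i, i + 1 < m → a i * a (i + 1) = 0)
    (hnz : a i0 ≠ 0) :
    3 * |∑ i ∈ Finset.range i0, a i * 2 ^ i| ≤ 2 ^ i0 - 1 := by
  match i0, hi0, hnz with
  | 0, _, _ => simp
  | (k+1), h, hnz =>
    have h0 : a k = 0 := by
      rcases mul_eq_zero.mp (hc k (by omega)) with h1 | h1
      · exact h1
      · exact absurd h1 hnz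
    rw [Finset.sum_range_succ, h0]
    simp only [zero_mul, add_zero]
    exact sd_bound a k (fun i hi => hd i (by omega)) (fun i hi => hc i (by omega))

/-- Let `A = (a_0,…,a_{m−1})` and `B = (b_0,…,b_{m−1})` be compact
signed-digit representations that differ somewhere, and let `i0` be the maximal index
`< m` where they differ. Then `val A < val B` iff `a i0 < b i0`. -/
theorem compact_value_lt_iff (m : ℕ) (a b : ℕ → ℤ)
    (hda : ∀ i < m, a i = -1 ∨ a i = 0 ∨ a i = 1)
    (hdb : ∀ i < m, b i = -1 ∨ b i = 0 ∨ b i = 1)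
    (hca : ∀ i, i + 1 < m → a i * a (i + 1) = 0)
    (hcb : ∀ i, i + 1 < m → b i * b (i + 1) = 0)
    (i0 : ℕ) (hi0 : i0 < m) (hne : a i0 ≠ b i0)
    (hmax : ∀ j, i0 < j → j < m → a j = b j) :
    (∑ i ∈ Finset.range m, a i * 2 ^ i < ∑ i ∈ Finset.range m, b i * 2 ^ i) ↔
      a i0 < b i0 := by
  have key : (∑ i ∈ Finset.range m, b i * 2 ^ i) - (∑ i ∈ Finset.range m, a i * 2 ^ i)
      = (b i0 - a i0) * 2 ^ i0
        + ((∑ i ∈ Finset.range i0, b i * 2 ^ i) - ∑ i ∈ Finset.range i0, a i * 2 ^ i) := by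
    rw [← Finset.sum_sub_distrib]
    rw [show ∑ i ∈ Finset.range m, (b i * 2 ^ i - a i * 2 ^ i)
        = ∑ i ∈ Finset.range (i0+1), (b i * 2 ^ i - a i * 2 ^ i) from
      (Finset.sum_subset (Finset.range_subset_range.mpr (by omega)) (by
        intro x hx hnx
        simp only [Finset.mem_range] at hx hnx
        rw [hmax x (by omega) hx]; ring)).symm]
    rw [Finset.sum_range_succ, Finset.sum_sub_distrib]
    ring
  set Ta := ∑ i ∈ Finset.range i0, a i * 2 ^ i with hTa
  set Tb := ∑ i ∈ Finset.range i0, b i * 2 ^ i with hTb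
  have hBa : 3 * |Ta| ≤ 2 ^ (i0 + 1) - 1 :=
    sd_bound a i0 (fun i hi => hda i (by omega)) (fun i hi => hca i (by omega))
  have hBb : 3 * |Tb| ≤ 2 ^ (i0 + 1) - 1 :=
    sd_bound b i0 (fun i hi => hdb i (by omega)) (fun i hi => hcb i (by omega))
  have hpos : (0:ℤ) < 2 ^ i0 := pow_pos (by norm_num) i0
  have hp2 : (2:ℤ) ^ (i0 + 1) = 2 * 2 ^ i0 := by ring
  have hTa1 := le_abs_self Ta
  have hTa2 := neg_abs_le Ta
  have hTb1 := le_abs_self Tb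
  have hTb2 := neg_abs_le Tb
  rw [← sub_pos, key]
  rcases hda i0 hi0 with ha | ha | ha <;> rcases hdb i0 hi0 with hb | hb | hb <;>
    rw [ha, hb] <;> try (exact absurd (ha.trans hb.symm) hne)
  · -- a = -1, b = 0
    have hBa' : 3 * |Ta| ≤ 2 ^ i0 - 1 :=
      sd_bound' a m i0 hi0 hda hca (by rw [ha]; norm_num)
    exact iff_of_true (by linarith) (by norm_num)
  · -- a = -1, b = 1
    have hBa' : 3 * |Ta| ≤ 2 ^ i0 - 1 :=
      sd_bound' a m i0 hi0 hda hca (by rw [ha]; norm_num)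
    have hBb' : 3 * |Tb| ≤ 2 ^ i0 - 1 :=
      sd_bound' b m i0 hi0 hdb hcb (by rw [hb]; norm_num)
    exact iff_of_true (by linarith) (by norm_num)
  · -- a = 0, b = -1
    have hBb' : 3 * |Tb| ≤ 2 ^ i0 - 1 :=
      sd_bound' b m i0 hi0 hdb hcb (by rw [hb]; norm_num)
    exact iff_of_false (by intro h; linarith) (by norm_num)
  · -- a = 0, b = 1
    have hBb' : 3 * |Tb| ≤ 2 ^ i0 - 1 :=
      sd_bound' b m i0 hi0 hdb hcb (by rw [hb]; norm_num)
    exact iff_of_true (by linarith) (by norm_num)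
  · -- a = 1, b = -1
    have hBa' : 3 * |Ta| ≤ 2 ^ i0 - 1 :=
      sd_bound' a m i0 hi0 hda hca (by rw [ha]; norm_num)
    have hBb' : 3 * |Tb| ≤ 2 ^ i0 - 1 :=
      sd_bound' b m i0 hi0 hdb hcb (by rw [hb]; norm_num)
    exact iff_of_false (by intro h; linarith) (by norm_num)
  · -- a = 1, b = 0
    have hBa' : 3 * |Ta| ≤ 2 ^ i0 - 1 :=
      sd_bound' a m i0 hi0 hda hca (by rw [ha]; norm_num)
    exact iff_of_false (by intro h; linarith) (by norm_num)
end

section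
/- Let (Γ,δ) be a reduced power circuit containing a node of evaluation 1, let C_0 be its initial maximal chain, let L and M be compact markings on Γ with ε(L) > ε(M), and let k be an integer with 0 ≤ k ≤ ⌊2^{|C_0|+1}/3⌋. Then ε(L) ≤ ε(M) + k if and only if both ε(M|_{Γ∖C_0}) = ε(L|_{Γ∖C_0}) and ε(L|_{C_0}) ≤ ε(M|_{C_0}) + k, where N|_S denotes the marking N restricted to S (set to 0 outside S). -/
/-- A *power circuit* `(Γ, δ)`: a finite dag on nodes `Fin n` with edge labels
`δ P Q ∈ {−1,0,1}` (edges are the pairs with `δ P Q ≠ 0`), acyclic, together with the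
node evaluation `ε` which satisfies the defining recursion `ε P = 2 ^ ε(Λ_P)`
(where `Λ_P = δ P ·` is the successor marking of `P` and
`ε(Λ_P) = Σ_Q δ P Q · ε Q`), and such that every node evaluates to an element of
`2^ℕ`. -/
structure PowerCircuit where
  n : ℕ
  δ : Fin n → Fin n → ℤ
  δ_range : ∀ P Q, δ P Q = -1 ∨ δ P Q = 0 ∨ δ P Q = 1
  acyclic : WellFounded fun Q P : Fin n => δ P Q ≠ 0
  ε : Fin n → ℝ
  ε_eq : ∀ P, ε P = (2 : ℝ) ^ (∑ Q, (δ P Q : ℝ) * ε Q)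
  ε_pow : ∀ P, ∃ k : ℕ, ε P = (2 : ℝ) ^ k

namespace PowerCircuit

/-- `ε(Λ_P)`, the evaluation of the successor marking of the node `P`. -/
noncomputable def lamVal (Γ : PowerCircuit) (P : Fin Γ.n) : ℝ :=
  ∑ Q, (Γ.δ P Q : ℝ) * Γ.ε Q

/-- The evaluation `ε(M) = Σ_P M(P)·ε(P)` of a marking `M`. -/
noncomputable def evalM (Γ : PowerCircuit) (M : Fin Γ.n → ℤ) : ℝ :=
  ∑ Q, (M Q : ℝ) * Γ.ε Q

/-- A marking takes values in `{−1,0,1}`. -/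
def IsMarking (Γ : PowerCircuit) (M : Fin Γ.n → ℤ) : Prop :=
  ∀ P, M P = -1 ∨ M P = 0 ∨ M P = 1

/-- A marking `M` is *compact* if for all distinct nodes `P, Q` in its support
`|ε(Λ_P) − ε(Λ_Q)| ≥ 2`. -/
def CompactM (Γ : PowerCircuit) (M : Fin Γ.n → ℤ) : Prop :=
  ∀ P Q, P ≠ Q → M P ≠ 0 → M Q ≠ 0 → 2 ≤ |Γ.lamVal P - Γ.lamVal Q|

/-- A power circuit is *reduced* if its nodes (as listed) are strictly increasing in
evaluation and all successor markings are compact. -/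
def Reduced (Γ : PowerCircuit) : Prop :=
  (∀ i j : Fin Γ.n, i < j → Γ.ε i < Γ.ε j) ∧ ∀ P, Γ.CompactM (Γ.δ P)

end PowerCircuit

/-! The nodes of the initial chain `C₀` evaluate to `2 ^ i` and have successor value `i`, so
compactness forbids two adjacent chain nodes in the support of `L` or `M`; such sparse signed
sums of `2 ^ i`, `i < c`, have absolute value at most `(2 ^ (c + 1) - 1) / 3`. Every node
outside `C₀` is a power of two at least `2 ^ (c + 1)`: the first one exceeds `2 ^ (c - 1)` and,
by maximality of `C₀`, is not `2 ^ c`. Hence `ε(L|_{Γ∖C₀}) - ε(M|_{Γ∖C₀})` is a multiple of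
`2 ^ (c + 1)`, and when `0 < ε(L) - ε(M) ≤ k ≤ (2 ^ (c + 1) - 1) / 3` it lies strictly between
`-2 ^ (c + 1)` and `2 ^ (c + 1)`, so it vanishes. -/

open Finset

theorem three_mul_abs_sum_mul_two_pow_le {f : ℕ → ℝ} {d : ℕ} (hf : ∀ i < d, |f i| ≤ 1)
    (hgap : ∀ i j, i < j → j < d → f i ≠ 0 → f j ≠ 0 → i + 2 ≤ j) :
    3 * |∑ i ∈ range d, f i * 2 ^ i| ≤ 2 ^ (d + 1) - 1 := by
  induction d using Nat.strong_induction_on with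
  | _ d ih =>
    match d with
    | 0 => norm_num
    | 1 =>
      have := hf 0 one_pos
      norm_num
      linarith
    | d + 2 =>
      have ih_of_le {d'} (hd' : d' ≤ d + 1) :
          3 * |∑ i ∈ range d', f i * 2 ^ i| ≤ 2 ^ (d' + 1) - 1 :=
        ih d' (by omega) (fun i hi => hf i (by omega)) (fun i j hij hj => hgap i j hij (by omega))
      rw [sum_range_succ]
      by_cases htop : f (d + 1) = 0
      · have h := ih_of_le le_rfl
        have : (2 : ℝ) ^ (d + 1 + 1) ≤ 2 ^ (d + 2 + 1) :=
          pow_le_pow_right₀ one_le_two (by omega)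
        rw [htop, zero_mul, add_zero]
        linarith
      · have hnext : f d = 0 := by
          by_contra h
          have := hgap d (d + 1) (by omega) (by omega) h htop
          omega
        rw [sum_range_succ, hnext, zero_mul, add_zero]
        have h := ih_of_le (d' := d) (by omega)
        have htop_le : |f (d + 1) * 2 ^ (d + 1)| ≤ 2 ^ (d + 1) := by
          rw [abs_mul, abs_of_pos (pow_pos (two_pos : (0 : ℝ) < 2) (d + 1))]
          exact mul_le_of_le_one_left (pow_pos two_pos _).le (hf (d + 1) (by omega))
        calc 3 * |∑ i ∈ range d, f i * 2 ^ i + f (d + 1) * 2 ^ (d + 1)|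
            ≤ 3 * |∑ i ∈ range d, f i * 2 ^ i| + 3 * |f (d + 1) * 2 ^ (d + 1)| := by
              linarith [abs_add_le (∑ i ∈ range d, f i * 2 ^ i) (f (d + 1) * 2 ^ (d + 1))]
          _ ≤ 2 ^ (d + 2 + 1) - 1 := by
              linarith [show (2 : ℝ) ^ (d + 2 + 1) = 4 * 2 ^ (d + 1) by ring]

theorem Int.three_mul_le_two_pow_sub_one {k : ℤ} {m : ℕ} (hk : k ≤ 2 ^ m / 3) :
    3 * k ≤ 2 ^ m - 1 := by
  have : ¬ (3 : ℤ) ∣ 2 ^ m := fun h => by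
    have := Int.prime_three.dvd_of_dvd_pow h
    norm_num at this
  omega

theorem eq_zero_of_mem_zmultiples_of_abs_lt {a x : ℝ} (hx : x ∈ AddSubgroup.zmultiples a)
    (hxa : |x| < a) : x = 0 := by
  obtain ⟨z, rfl⟩ := AddSubgroup.mem_zmultiples_iff.mp hx
  have ha : 0 < a := (abs_nonneg _).trans_lt hxa
  have : |(z : ℝ)| < 1 := by
    rw [zsmul_eq_mul, abs_mul, abs_of_pos ha] at hxa
    exact (mul_lt_iff_lt_one_left ha).mp hxa
  rw [Int.abs_lt_one_iff.mp (by exact_mod_cast this : |z| < 1), zero_smul]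

namespace PowerCircuit

variable {Γ : PowerCircuit}

theorem evalM_eq_restrict_ge_add_restrict_lt (N : Fin Γ.n → ℤ) (c : ℕ) :
    Γ.evalM N = Γ.evalM (fun P => if c ≤ (P : ℕ) then N P else 0)
      + Γ.evalM (fun P => if (P : ℕ) < c then N P else 0) := by
  unfold evalM
  rw [← sum_add_distrib]
  refine sum_congr rfl fun P _ => ?_
  by_cases h : (P : ℕ) < c
  · simp [h, Nat.not_le.mpr h]
  · simp [h, Nat.le_of_not_lt h]

theorem evalM_mem_zmultiples {N : Fin Γ.n → ℤ} {a : ℝ}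
    (h : ∀ P, N P ≠ 0 → Γ.ε P ∈ AddSubgroup.zmultiples a) :
    Γ.evalM N ∈ AddSubgroup.zmultiples a := by
  refine AddSubgroup.sum_mem _ fun P _ => ?_
  by_cases hP : N P = 0
  · simp [hP]
  · rw [← zsmul_eq_mul]
    exact AddSubgroup.zsmul_mem _ (h P hP) _

theorem ε_mem_zmultiples_of_two_pow_le {P : Fin Γ.n} {m : ℕ} (h : 2 ^ m ≤ Γ.ε P) :
    Γ.ε P ∈ AddSubgroup.zmultiples (2 ^ m : ℝ) := by
  obtain ⟨e, he⟩ := Γ.ε_pow P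
  rw [he] at h ⊢
  have hme : m ≤ e := (pow_le_pow_iff_right₀ one_lt_two).mp h
  refine AddSubgroup.mem_zmultiples_iff.mpr ⟨2 ^ (e - m), ?_⟩
  rw [zsmul_eq_mul, Int.cast_pow, Int.cast_ofNat, ← pow_add, Nat.sub_add_cancel hme]

theorem lamVal_eq_of_ε_eq_two_pow {P : Fin Γ.n} {i : ℕ} (h : Γ.ε P = 2 ^ i) :
    Γ.lamVal P = i := by
  rw [Γ.ε_eq P, ← Real.rpow_natCast] at h
  exact (Real.rpow_right_inj two_pos (by norm_num)).mp h

section InitialChain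

variable {c : ℕ} (hcn : c ≤ Γ.n)

theorem ε_eq_two_pow_of_chain (hn : 0 < Γ.n) (hone : Γ.ε ⟨0, hn⟩ = 1)
    (hchain : ∀ i, (h : i + 1 < c) →
      Γ.ε ⟨i + 1, h.trans_le hcn⟩ = 2 * Γ.ε ⟨i, (Nat.lt_of_succ_lt h).trans_le hcn⟩) :
    ∀ i (h : i < c), Γ.ε ⟨i, h.trans_le hcn⟩ = 2 ^ i := by
  intro i
  induction i with
  | zero => exact fun _ => hone.trans (pow_zero 2).symm
  | succ i ih =>
    exact fun h => by rw [hchain i h, ih (Nat.lt_of_succ_lt h), pow_succ, mul_comm]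

theorem two_pow_succ_le_ε_of_maxChain (hmono : StrictMono Γ.ε) (hc1 : 1 ≤ c)
    (hε : ∀ i (h : i < c), Γ.ε ⟨i, h.trans_le hcn⟩ = 2 ^ i)
    (hmaxchain : ∀ h : c < Γ.n, Γ.ε ⟨c, h⟩ ≠ 2 * Γ.ε ⟨c - 1, (c.sub_le 1).trans_lt h⟩)
    {P : Fin Γ.n} (hP : c ≤ (P : ℕ)) : 2 ^ (c + 1) ≤ Γ.ε P := by
  have hc : c < Γ.n := hP.trans_lt P.isLt
  obtain ⟨e, he⟩ := Γ.ε_pow ⟨c, hc⟩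
  have hprev : Γ.ε ⟨c - 1, (c.sub_le 1).trans_lt hc⟩ = 2 ^ (c - 1) :=
    hε (c - 1) (Nat.sub_lt hc1 one_pos)
  have hlt : c - 1 < e := by
    have := hmono (Fin.mk_lt_mk.mpr (Nat.sub_lt hc1 one_pos) :
      (⟨c - 1, (c.sub_le 1).trans_lt hc⟩ : Fin Γ.n) < ⟨c, hc⟩)
    rwa [hprev, he, pow_lt_pow_iff_right₀ one_lt_two] at this
  have hne : e ≠ c := by
    rintro rfl
    apply hmaxchain hc
    rw [he, hprev, ← pow_succ', Nat.sub_add_cancel hc1]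
  calc (2 : ℝ) ^ (c + 1) ≤ 2 ^ e := pow_le_pow_right₀ one_le_two (by omega)
    _ = Γ.ε ⟨c, hc⟩ := he.symm
    _ ≤ Γ.ε P := hmono.monotone (Fin.mk_le_mk.mpr hP)

theorem evalM_restrict_lt_eq_sum_range
    (hε : ∀ i (h : i < c), Γ.ε ⟨i, h.trans_le hcn⟩ = 2 ^ i) (N : Fin Γ.n → ℤ) :
    Γ.evalM (fun P => if (P : ℕ) < c then N P else 0)
      = ∑ i ∈ range c, ((Function.extend Fin.val N 0 i : ℤ) : ℝ) * 2 ^ i := by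
  set g : ℕ → ℝ :=
    fun i => if i < c then ((Function.extend Fin.val N 0 i : ℤ) : ℝ) * 2 ^ i else 0
  calc Γ.evalM (fun P => if (P : ℕ) < c then N P else 0)
      = ∑ P : Fin Γ.n, g P := by
        refine sum_congr rfl fun P _ => ?_
        by_cases h : (P : ℕ) < c
        · simp only [g, if_pos h, Fin.val_injective.extend_apply, ← hε P h]
        · simp only [g, if_neg h, Int.cast_zero, zero_mul]
    _ = ∑ i ∈ range Γ.n, g i := Fin.sum_univ_eq_sum_range g _
    _ = ∑ i ∈ range c, g i := (sum_subset (range_subset_range.mpr hcn)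
          fun i _ hi => if_neg (by simpa using hi)).symm
    _ = _ := sum_congr rfl fun i hi => if_pos (mem_range.mp hi)

theorem three_mul_abs_evalM_restrict_lt_le
    (hε : ∀ i (h : i < c), Γ.ε ⟨i, h.trans_le hcn⟩ = 2 ^ i)
    {N : Fin Γ.n → ℤ} (hN : Γ.IsMarking N) (hNc : Γ.CompactM N) :
    3 * |Γ.evalM (fun P => if (P : ℕ) < c then N P else 0)| ≤ 2 ^ (c + 1) - 1 := by
  have hext (i : ℕ) (hi : i < c) : Function.extend Fin.val N 0 i = N ⟨i, hi.trans_le hcn⟩ :=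
    Fin.val_injective.extend_apply N 0 ⟨i, hi.trans_le hcn⟩
  rw [evalM_restrict_lt_eq_sum_range hcn hε]
  refine three_mul_abs_sum_mul_two_pow_le (fun i hi => ?_) fun i j hij hj hi0 hj0 => ?_
  · rw [hext i hi]
    rcases hN ⟨i, hi.trans_le hcn⟩ with h | h | h <;> simp [h]
  · have hi : i < c := hij.trans hj
    rw [hext i hi, Int.cast_ne_zero] at hi0
    rw [hext j hj, Int.cast_ne_zero] at hj0
    have hgap := hNc _ _ (Fin.ne_of_val_ne hij.ne) hi0 hj0
    rw [lamVal_eq_of_ε_eq_two_pow (hε i hi), lamVal_eq_of_ε_eq_two_pow (hε j hj), abs_sub_comm,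
      abs_of_nonneg (sub_nonneg.mpr (Nat.cast_le.mpr hij.le))] at hgap
    exact_mod_cast (le_sub_iff_add_le'.mp hgap)

end InitialChain

end PowerCircuit

/-- Let `(Γ,δ)` be a reduced power circuit containing a node of
evaluation `1` (necessarily the first node), and let its initial maximal chain `C₀`
consist of the first `c` nodes (`c ≥ 1`): consecutive evaluations double along `C₀`
and `C₀` cannot be extended. Let `L, M` be compact markings with `ε(L) > ε(M)` and
`0 ≤ k ≤ ⌊2^{|C₀|+1}/3⌋`. Then `ε(L) ≤ ε(M) + k` iff
`ε(M|_{Γ∖C₀}) = ε(L|_{Γ∖C₀})` and `ε(L|_{C₀}) ≤ ε(M|_{C₀}) + k`. -/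
theorem reduced_compare_small_difference (Γ : PowerCircuit) (hred : Γ.Reduced)
    (hn : 0 < Γ.n) (hone : Γ.ε ⟨0, hn⟩ = 1)
    (c : ℕ) (hc1 : 1 ≤ c) (hcn : c ≤ Γ.n)
    (hchain : ∀ i, (h : i + 1 < c) →
      Γ.ε ⟨i + 1, h.trans_le hcn⟩ = 2 * Γ.ε ⟨i, (Nat.lt_of_succ_lt h).trans_le hcn⟩)
    (hmaxchain : ∀ h : c < Γ.n, Γ.ε ⟨c, h⟩ ≠ 2 * Γ.ε ⟨c - 1, by omega⟩)
    (L M : Fin Γ.n → ℤ)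
    (hL : Γ.IsMarking L) (hM : Γ.IsMarking M)
    (hLc : Γ.CompactM L) (hMc : Γ.CompactM M)
    (hgt : Γ.evalM M < Γ.evalM L)
    (k : ℤ) (hk : k ≤ 2 ^ (c + 1) / 3) :
    Γ.evalM L ≤ Γ.evalM M + (k : ℝ) ↔
      (Γ.evalM (fun P => if c ≤ (P : ℕ) then M P else 0)
          = Γ.evalM (fun P => if c ≤ (P : ℕ) then L P else 0)
        ∧ Γ.evalM (fun P => if (P : ℕ) < c then L P else 0)
            ≤ Γ.evalM (fun P => if (P : ℕ) < c then M P else 0) + (k : ℝ)) := by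
  have hε := PowerCircuit.ε_eq_two_pow_of_chain hcn hn hone hchain
  have hhigh (N : Fin Γ.n → ℤ) : Γ.evalM (fun P => if c ≤ (P : ℕ) then N P else 0)
      ∈ AddSubgroup.zmultiples (2 ^ (c + 1) : ℝ) :=
    PowerCircuit.evalM_mem_zmultiples fun _ hP =>
      PowerCircuit.ε_mem_zmultiples_of_two_pow_le <|
        PowerCircuit.two_pow_succ_le_ε_of_maxChain hcn hred.1 hc1 hε hmaxchain
          (ite_ne_right_iff.mp hP).1
  have hlow {N : Fin Γ.n → ℤ} (hN : Γ.IsMarking N) (hNc : Γ.CompactM N) :=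
    abs_le.mp <| (le_div_iff₀' three_pos).mpr <|
      PowerCircuit.three_mul_abs_evalM_restrict_lt_le hcn hε hN hNc
  obtain ⟨hL₁, hL₂⟩ := hlow hL hLc
  obtain ⟨hM₁, hM₂⟩ := hlow hM hMc
  have hk3 : 3 * (k : ℝ) ≤ 2 ^ (c + 1) - 1 := by
    exact_mod_cast Int.three_mul_le_two_pow_sub_one hk
  rw [PowerCircuit.evalM_eq_restrict_ge_add_restrict_lt L c,
    PowerCircuit.evalM_eq_restrict_ge_add_restrict_lt M c] at hgt ⊢
  constructor
  · intro hle
    have hhigh_sub := eq_zero_of_mem_zmultiples_of_abs_lt (sub_mem (hhigh L) (hhigh M))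
      (abs_lt.mpr ⟨by linarith, by linarith⟩)
    exact ⟨by linarith, by linarith⟩
  · rintro ⟨hhigh_eq, hlow_le⟩
    linarith
end

section
/- For every power circuit (Π,δ_Π) with n = |Π| ≥ 1 nodes and every marking M on Π, there exist a reduced power circuit (Γ,δ) and a compact marking M̃ on Γ such that ε(M̃) = ε(M), the number of maximal chains of Γ is at most n + 1, and |Γ| ≤ (n+1)² · (log₂ n + 2). -/
namespace PowerCircuit

/-- The chain starts of a (reduced) power circuit: nodes which are not the double of
their immediate predecessor in the sorted node list.  For a reduced power circuit the
maximal chains partition the node set and are in bijection with their start nodes, so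
the number of maximal chains is the number of chain starts. -/
noncomputable def chainCount (Γ : PowerCircuit) : ℕ :=
  {i : Fin Γ.n | (i : ℕ) = 0 ∨
     ∀ j : Fin Γ.n, (j : ℕ) + 1 = (i : ℕ) → Γ.ε i ≠ 2 * Γ.ε j}.ncard

end PowerCircuit

/-! The nodes of `Π` evaluate to `2 ^ k P` with `k P = Σ_Q δ(P,Q) 2 ^ k Q`. Every integer has a
non-adjacent form (NAF): signed binary digits in `{-1, 0, 1}`, no two adjacent ones nonzero,
and the digits of `2 ^ p * m + L` from position `p` on are those of `m` whenever
`3|L| < 2 ^ p`. Hence the NAF of `Σ_Q c_Q 2 ^ k Q + j` (with `|c_Q| ≤ 1` and `j` small) has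
nonzero digits only at positions `p ≤ b` or `k Q ≤ p ≤ k Q + w`, once `3n < 2 ^ w` and
`3w ≤ 2 ^ b`. So the set `S` of these positions is closed under taking NAF digits, and the
circuit with one node `2 ^ s` for each `s ∈ S`, successor marking the NAF of `s`, is reduced;
the NAF of `ε(M)` is a compact marking on it. Its chains start at `0` or at some `k P`, and
`|S| ≤ b + 1 + n(w + 1)`. -/

namespace Int

/-- When `x` is odd, `x - nafDigit x` is divisible by `4`; this is what makes the expansion
`naf x` non-adjacent. -/
def nafDigit (x : ℤ) : ℤ := if 2 ∣ x then 0 else 2 - x % 4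

def nafShift (x : ℤ) : ℤ := (x - nafDigit x) / 2

def naf (x : ℤ) (p : ℕ) : ℤ := nafDigit (nafShift^[p] x)

lemma nafDigit_eq_neg_one_or_zero_or_one (x : ℤ) :
    nafDigit x = -1 ∨ nafDigit x = 0 ∨ nafDigit x = 1 := by
  unfold nafDigit; split_ifs <;> omega

lemma nafDigit_add_two_mul_nafShift (x : ℤ) : nafDigit x + 2 * nafShift x = x := by
  unfold nafShift nafDigit; split_ifs <;> omega

lemma nafDigit_two_mul (m : ℤ) : nafDigit (2 * m) = 0 := by
  simp [nafDigit]

lemma nafDigit_nafShift_of_ne_zero {x : ℤ} (hx : nafDigit x ≠ 0) :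
    nafDigit (nafShift x) = 0 := by
  unfold nafShift nafDigit at *; split_ifs at * <;> omega

lemma natAbs_nafShift_lt {x : ℤ} (hx : x ≠ 0) : (nafShift x).natAbs < x.natAbs := by
  unfold nafShift nafDigit; split_ifs <;> omega

lemma naf_eq_neg_one_or_zero_or_one (x : ℤ) (p : ℕ) :
    naf x p = -1 ∨ naf x p = 0 ∨ naf x p = 1 :=
  nafDigit_eq_neg_one_or_zero_or_one _

lemma naf_succ (x : ℤ) (p : ℕ) : naf x (p + 1) = naf (nafShift x) p := by
  rw [naf, naf, Function.iterate_succ_apply]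

lemma naf_succ_eq_zero {x : ℤ} {p : ℕ} (h : naf x p ≠ 0) : naf x (p + 1) = 0 := by
  rw [naf, Function.iterate_succ_apply']
  exact nafDigit_nafShift_of_ne_zero h

lemma add_two_le_of_naf_ne_zero {x : ℤ} {p q : ℕ} (hpq : p < q) (hp : naf x p ≠ 0)
    (hq : naf x q ≠ 0) : p + 2 ≤ q := by
  by_contra! h
  obtain rfl : q = p + 1 := by omega
  exact hq (naf_succ_eq_zero hp)

lemma lt_natAbs_of_naf_ne_zero {x : ℤ} {p : ℕ} (h : naf x p ≠ 0) : p < x.natAbs := by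
  induction p generalizing x with
  | zero =>
    have : x ≠ 0 := by rintro rfl; exact h rfl
    omega
  | succ p ih =>
    rw [naf_succ] at h
    have hshift := ih h
    have hx : x ≠ 0 := by rintro rfl; simp [nafShift, nafDigit] at hshift
    have := natAbs_nafShift_lt hx
    omega

lemma eq_sum_naf_add (x : ℤ) (p : ℕ) :
    x = ∑ q ∈ Finset.range p, naf x q * 2 ^ q + 2 ^ p * nafShift^[p] x := by
  induction p generalizing x with
  | zero => simp
  | succ p ih =>
    rw [Finset.sum_range_succ', Function.iterate_succ_apply]
    simp only [naf_succ, pow_succ]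
    conv_lhs => rw [← nafDigit_add_two_mul_nafShift x, ih (nafShift x)]
    rw [naf, Function.iterate_zero_apply, mul_add, Finset.mul_sum]
    ring_nf

lemma three_mul_abs_sum_naf_lt (x : ℤ) (p : ℕ) :
    3 * |∑ q ∈ Finset.range p, naf x q * 2 ^ q| < 2 ^ (p + 1) ∧
      (naf x p ≠ 0 → 3 * |∑ q ∈ Finset.range p, naf x q * 2 ^ q| < 2 ^ p) := by
  induction p with
  | zero => simp
  | succ p ih =>
    rw [Finset.sum_range_succ]
    by_cases hp : naf x p = 0
    · rw [hp, zero_mul, add_zero]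
      exact ⟨ih.1.trans (by gcongr <;> norm_num), fun _ => ih.1⟩
    · refine ⟨?_, fun h => absurd (naf_succ_eq_zero hp) h⟩
      have hdigit : |naf x p * 2 ^ p| ≤ 2 ^ p := by
        rw [abs_mul, abs_pow, abs_two]
        rcases naf_eq_neg_one_or_zero_or_one x p with h | h | h <;> simp [h]
      calc 3 * |∑ q ∈ Finset.range p, naf x q * 2 ^ q + naf x p * 2 ^ p|
          ≤ 3 * |∑ q ∈ Finset.range p, naf x q * 2 ^ q| + 3 * |naf x p * 2 ^ p| := by
            linarith [abs_add_le (∑ q ∈ Finset.range p, naf x q * 2 ^ q) (naf x p * 2 ^ p)]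
        _ < 2 ^ p + 3 * 2 ^ p := by linarith [ih.2 hp]
        _ = 2 ^ (p + 1 + 1) := by ring

lemma nafShift_iterate_eq_of_eq_two_pow_mul_add {x m L : ℤ} {p : ℕ} (hx : x = 2 ^ p * m + L)
    (hL : 3 * |L| < 2 ^ p) : nafShift^[p] x = m := by
  set s := ∑ q ∈ Finset.range p, naf x q * 2 ^ q
  have hrepr := eq_sum_naf_add x p
  have hs := (three_mul_abs_sum_naf_lt x p).1
  have key : 2 ^ p * |nafShift^[p] x - m| < 2 ^ p * 1 := by
    have : 2 ^ p * |nafShift^[p] x - m| = |L - s| := by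
      rw [← abs_of_pos (by positivity : (0 : ℤ) < 2 ^ p), ← abs_mul]
      congr 1; linarith
    rw [this]
    have := abs_sub L s
    rw [pow_succ] at hs
    linarith
  have := lt_of_mul_lt_mul_left key (by positivity)
  rw [abs_lt] at this
  omega

lemma naf_eq_zero_of_eq_two_pow_mul_add {x H L : ℤ} {p : ℕ} (hx : x = 2 ^ (p + 1) * H + L)
    (hL : 3 * |L| < 2 ^ p) : naf x p = 0 := by
  rw [naf, nafShift_iterate_eq_of_eq_two_pow_mul_add (m := 2 * H) (by rw [hx]; ring) hL,
    nafDigit_two_mul]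

lemma naf_eq_zero_of_three_mul_abs_lt {x : ℤ} {p : ℕ} (h : 3 * |x| < 2 ^ p) : naf x p = 0 :=
  naf_eq_zero_of_eq_two_pow_mul_add (H := 0) (by ring) h

lemma sum_naf_of_support_subset {x : ℤ} {S : Finset ℕ} (hS : ∀ p, naf x p ≠ 0 → p ∈ S) :
    ∑ p ∈ S, naf x p * 2 ^ p = x := by
  obtain ⟨m, hm⟩ : ∃ m : ℕ, 3 * |x| < 2 ^ m := pow_unbounded_of_one_lt _ (by norm_num)
  have hzero : ∀ p, naf x p = 0 ∨ p ∈ S ∩ Finset.range m := fun p => by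
    by_cases hp : naf x p = 0
    · exact .inl hp
    · refine .inr (Finset.mem_inter.mpr ⟨hS p hp, Finset.mem_range.mpr ?_⟩)
      by_contra! hmp
      exact hp (naf_eq_zero_of_three_mul_abs_lt (hm.trans_le (pow_le_pow_right₀ one_le_two hmp)))
  have hsum := eq_sum_naf_add x m
  rw [nafShift_iterate_eq_of_eq_two_pow_mul_add (m := 0) (by ring) hm, mul_zero, add_zero] at hsum
  rw [← Finset.sum_subset (Finset.inter_subset_left (s₂ := Finset.range m)),
    Finset.sum_subset (Finset.inter_subset_right (s₁ := S)), ← hsum] <;>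
  · intro p _ hp
    rcases hzero p with h | h
    · rw [h, zero_mul]
    · exact absurd h hp

lemma six_mul_abs_sum_lt {ι : Type*} {t : Finset ι} {c : ι → ℤ} {k : ι → ℕ} {w p : ℕ}
    (hc : ∀ i ∈ t, |c i| ≤ 1) (ht : 3 * t.card < 2 ^ w) (hk : ∀ i ∈ t, k i + w < p) :
    6 * |∑ i ∈ t, c i * 2 ^ k i| < 2 ^ p := by
  have hsum : |∑ i ∈ t, c i * 2 ^ k i| * 2 ^ (w + 1) ≤ t.card * 2 ^ p := by
    calc |∑ i ∈ t, c i * 2 ^ k i| * 2 ^ (w + 1)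
        ≤ (∑ i ∈ t, |c i * 2 ^ k i|) * 2 ^ (w + 1) := by
          gcongr; exact Finset.abs_sum_le_sum_abs _ _
      _ ≤ ∑ _i ∈ t, (2 : ℤ) ^ p := by
          rw [Finset.sum_mul]
          refine Finset.sum_le_sum fun i hi => ?_
          rw [abs_mul, abs_pow, abs_two, mul_assoc, ← pow_add]
          calc |c i| * 2 ^ (k i + (w + 1)) ≤ 1 * 2 ^ (k i + (w + 1)) := by
                gcongr; exact hc i hi
            _ ≤ 2 ^ p := by
                rw [one_mul]; exact pow_le_pow_right₀ one_le_two (by linarith [hk i hi])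
      _ = t.card * 2 ^ p := by rw [Finset.sum_const, nsmul_eq_mul]
  have ht' : 3 * (t.card : ℤ) < 2 ^ w := by exact_mod_cast ht
  have hw : (0 : ℤ) < 2 ^ w := by positivity
  have hp : (0 : ℤ) < 2 ^ p := by positivity
  refine lt_of_mul_lt_mul_right (a := 2 ^ w) ?_ hw.le
  calc 6 * |∑ i ∈ t, c i * 2 ^ k i| * 2 ^ w
        = 3 * (|∑ i ∈ t, c i * 2 ^ k i| * 2 ^ (w + 1)) := by ring
    _ ≤ 3 * t.card * 2 ^ p := by linarith
    _ < 2 ^ w * 2 ^ p := by gcongr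
    _ = 2 ^ p * 2 ^ w := mul_comm _ _

lemma naf_sum_add_eq_zero_of_gap {ι : Type*} (s : Finset ι) (c : ι → ℤ) (k : ι → ℕ) {j : ℤ}
    {w p : ℕ} (hc : ∀ i ∈ s, |c i| ≤ 1) (hs : 3 * s.card < 2 ^ w) (hj : 6 * |j| ≤ 2 ^ p)
    (hk : ∀ i ∈ s, p < k i ∨ k i + w < p) :
    naf (∑ i ∈ s, c i * 2 ^ k i + j) p = 0 := by
  classical
  set high := s.filter fun i => p < k i
  set low := s.filter fun i => ¬p < k i
  have hlow : 6 * |∑ i ∈ low, c i * 2 ^ k i| < 2 ^ p := by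
    refine six_mul_abs_sum_lt (w := w) (fun i hi => hc i (Finset.mem_filter.mp hi).1) ?_
      fun i hi => ?_
    · exact lt_of_le_of_lt (Nat.mul_le_mul_left 3 (Finset.card_filter_le _ _)) hs
    · obtain ⟨hi, hpi⟩ := Finset.mem_filter.mp hi
      exact (hk i hi).resolve_left hpi
  refine naf_eq_zero_of_eq_two_pow_mul_add (H := ∑ i ∈ high, c i * 2 ^ (k i - (p + 1)))
    (L := ∑ i ∈ low, c i * 2 ^ k i + j) ?_ ?_
  · rw [← Finset.sum_filter_add_sum_filter_not s (fun i => p < k i), Finset.mul_sum, add_assoc]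
    congr 1
    refine Finset.sum_congr rfl fun i hi => ?_
    rw [mul_left_comm, ← pow_add, Nat.add_sub_cancel' (Finset.mem_filter.mp hi).2]
  · linarith [abs_add_le (∑ i ∈ low, c i * 2 ^ k i) j]

end Int

lemma Finset.sum_orderEmbOfFin {α M : Type*} [LinearOrder α] [AddCommMonoid M] (S : Finset α)
    (f : α → M) : ∑ i, f (S.orderEmbOfFin rfl i) = ∑ x ∈ S, f x := by
  conv_rhs => rw [← S.map_orderEmbOfFin_univ rfl, Finset.sum_map]
  rfl

lemma Finset.exists_orderEmbOfFin_add_one_eq {S : Finset ℕ} {i : Fin S.card}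
    (h0 : S.orderEmbOfFin rfl i ≠ 0) (hpred : S.orderEmbOfFin rfl i - 1 ∈ S) :
    ∃ j : Fin S.card, (j : ℕ) + 1 = i ∧ S.orderEmbOfFin rfl j + 1 = S.orderEmbOfFin rfl i := by
  set e := S.orderEmbOfFin rfl
  obtain ⟨k, hk⟩ : e i - 1 ∈ Set.range e := by rwa [S.range_orderEmbOfFin rfl]
  have hki : k < i := e.lt_iff_lt.mp (by omega)
  refine ⟨⟨i - 1, by omega⟩, by simp only; omega, ?_⟩
  have h1 : e k ≤ e ⟨i - 1, by omega⟩ := e.le_iff_le.mpr (Fin.le_def.mpr (by simp only; omega))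
  have h2 : e ⟨i - 1, by omega⟩ < e i := e.lt_iff_lt.mpr (Fin.lt_def.mpr (by simp only; omega))
  omega

def IsNafClosed (S : Finset ℕ) : Prop :=
  ∀ v ∈ S, ∀ p, Int.naf v p ≠ 0 → p ∈ S

lemma sum_naf_orderEmbOfFin {S : Finset ℕ} {x : ℤ} (hx : ∀ p, Int.naf x p ≠ 0 → p ∈ S) :
    ∑ i, (Int.naf x (S.orderEmbOfFin rfl i) : ℝ) * 2 ^ S.orderEmbOfFin rfl i = x := by
  rw [Finset.sum_orderEmbOfFin S fun p => (Int.naf x p : ℝ) * 2 ^ p]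
  exact_mod_cast Int.sum_naf_of_support_subset hx

namespace PowerCircuit

/-- The node `i` stands for the `i`-th element `s` of `S` in increasing order: it evaluates to
`2 ^ s`, and its successor marking is the non-adjacent form of `s`. -/
noncomputable def ofNafClosed (S : Finset ℕ) (hS : IsNafClosed S) : PowerCircuit where
  n := S.card
  δ i j := Int.naf (S.orderEmbOfFin rfl i) (S.orderEmbOfFin rfl j)
  δ_range _ _ := Int.naf_eq_neg_one_or_zero_or_one _ _
  acyclic := Subrelation.wf (fun h => (S.orderEmbOfFin rfl).lt_iff_lt.mp
    (by simpa using Int.lt_natAbs_of_naf_ne_zero h)) wellFounded_lt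
  ε i := 2 ^ S.orderEmbOfFin rfl i
  ε_eq i := by
    rw [sum_naf_orderEmbOfFin (hS _ (S.orderEmbOfFin_mem rfl i)), Int.cast_natCast,
      Real.rpow_natCast]
  ε_pow _ := ⟨_, rfl⟩

variable {S : Finset ℕ} (hS : IsNafClosed S)

lemma lamVal_ofNafClosed (i : Fin (ofNafClosed S hS).n) :
    (ofNafClosed S hS).lamVal i = S.orderEmbOfFin rfl i := by
  rw [lamVal, ← Int.cast_natCast (R := ℝ)]
  exact sum_naf_orderEmbOfFin (hS _ (S.orderEmbOfFin_mem rfl i))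

lemma evalM_ofNafClosed {x : ℤ} (hx : ∀ p, Int.naf x p ≠ 0 → p ∈ S) :
    (ofNafClosed S hS).evalM (fun i => Int.naf x (S.orderEmbOfFin rfl i)) = x :=
  sum_naf_orderEmbOfFin hx

lemma isMarking_ofNafClosed (x : ℤ) :
    (ofNafClosed S hS).IsMarking (fun i => Int.naf x (S.orderEmbOfFin rfl i)) :=
  fun _ => Int.naf_eq_neg_one_or_zero_or_one _ _

lemma compactM_ofNafClosed (x : ℤ) :
    (ofNafClosed S hS).CompactM (fun i => Int.naf x (S.orderEmbOfFin rfl i)) := by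
  intro i j hij hi hj
  rw [lamVal_ofNafClosed, lamVal_ofNafClosed]
  set e := S.orderEmbOfFin rfl
  rcases lt_or_gt_of_ne (e.injective.ne hij) with h | h
  · have := Int.add_two_le_of_naf_ne_zero h hi hj
    rw [abs_sub_comm, abs_of_nonneg] <;>
    · have : (e i + 2 : ℝ) ≤ e j := by exact_mod_cast this
      linarith
  · have := Int.add_two_le_of_naf_ne_zero h hj hi
    rw [abs_of_nonneg] <;>
    · have : (e j + 2 : ℝ) ≤ e i := by exact_mod_cast this
      linarith

lemma reduced_ofNafClosed : (ofNafClosed S hS).Reduced :=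
  ⟨fun _ _ hij => pow_lt_pow_right₀ one_lt_two ((S.orderEmbOfFin rfl).strictMono hij),
    fun i => compactM_ofNafClosed hS (S.orderEmbOfFin rfl i)⟩

lemma chainCount_ofNafClosed_le :
    (ofNafClosed S hS).chainCount ≤ (S.filter fun s => s = 0 ∨ s - 1 ∉ S).card := by
  set e := S.orderEmbOfFin rfl
  have hstart : ∀ i : Fin S.card, (i : ℕ) = 0 ∨ (∀ j : Fin S.card, (j : ℕ) + 1 = i →
      (ofNafClosed S hS).ε i ≠ 2 * (ofNafClosed S hS).ε j) →
      e i ∈ S.filter fun s => s = 0 ∨ s - 1 ∉ S := by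
    intro i hi
    refine Finset.mem_filter.mpr
      ⟨S.orderEmbOfFin_mem rfl i, or_iff_not_imp_left.mpr fun h0 hpred => ?_⟩
    obtain ⟨j, hj, hej⟩ := Finset.exists_orderEmbOfFin_add_one_eq h0 hpred
    rcases hi with hi | hi
    · omega
    · exact hi j hj (by simp only [ofNafClosed, ← hej, pow_succ]; ring)
  rw [chainCount, ← Set.ncard_coe_finset]
  exact Set.ncard_le_ncard_of_injOn e (fun i hi => hstart i hi) e.injective.injOn
    (Finset.finite_toSet _)

lemma exists_exponents (Γ : PowerCircuit) :
    ∃ k : Fin Γ.n → ℕ, (∀ P, Γ.ε P = 2 ^ k P) ∧ ∀ P, (k P : ℤ) = ∑ Q, Γ.δ P Q * 2 ^ k Q := by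
  choose k hk using Γ.ε_pow
  refine ⟨k, hk, fun P => ?_⟩
  have h := Γ.ε_eq P
  rw [hk P, ← Real.rpow_natCast, Real.rpow_right_inj two_pos (by norm_num)] at h
  simp only [hk] at h
  exact_mod_cast h

end PowerCircuit

section WindowUnion

variable {ι : Type*} [Fintype ι]

def windowUnion (w b : ℕ) (k : ι → ℕ) : Finset ℕ :=
  Finset.Icc 0 b ∪ Finset.univ.biUnion fun i => Finset.Icc (k i) (k i + w)

variable {w b : ℕ} {k : ι → ℕ}

lemma naf_eq_zero_of_notMem_windowUnion (hw : 3 * Fintype.card ι < 2 ^ w) (hb : 3 * w ≤ 2 ^ b)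
    {c : ι → ℤ} (hc : ∀ i, |c i| ≤ 1) {j : ℕ} (hj : j ≤ w) {p : ℕ}
    (hp : p ∉ windowUnion w b k) : Int.naf (∑ i, c i * 2 ^ k i + j) p = 0 := by
  simp only [windowUnion, Finset.mem_union, Finset.mem_Icc, Finset.mem_biUnion,
    Finset.mem_univ, true_and, not_or, not_exists, not_and_or, not_le] at hp
  obtain ⟨hbp, hgap⟩ := hp
  have hbp : b < p := hbp.resolve_left (Nat.not_lt_zero p)
  refine Int.naf_sum_add_eq_zero_of_gap _ c k (w := w) (fun i _ => hc i) hw ?_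
    fun i _ => hgap i
  have : (2 : ℤ) ^ (b + 1) ≤ 2 ^ p := pow_le_pow_right₀ one_le_two hbp
  have : (3 * w : ℤ) ≤ 2 ^ b := by exact_mod_cast hb
  rw [abs_of_nonneg (by positivity), pow_succ] at *
  have : (j : ℤ) ≤ w := by exact_mod_cast hj
  linarith

lemma mem_windowUnion_of_naf_sum_ne_zero (hw : 3 * Fintype.card ι < 2 ^ w) (hb : 3 * w ≤ 2 ^ b)
    {c : ι → ℤ} (hc : ∀ i, |c i| ≤ 1) {p : ℕ} (hp : Int.naf (∑ i, c i * 2 ^ k i) p ≠ 0) :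
    p ∈ windowUnion w b k := by
  by_contra hpS
  have := naf_eq_zero_of_notMem_windowUnion hw hb hc (Nat.zero_le w) hpS
  rw [Nat.cast_zero, add_zero] at this
  exact hp this

lemma isNafClosed_windowUnion (hw : 3 * Fintype.card ι < 2 ^ w) (hb : 3 * w ≤ 2 ^ b)
    {c : ι → ι → ℤ} (hc : ∀ i j, |c i j| ≤ 1) (hk : ∀ i, (k i : ℤ) = ∑ j, c i j * 2 ^ k j) :
    IsNafClosed (windowUnion w b k) := by
  intro v hv p hp
  have hpv : p < v := by simpa using Int.lt_natAbs_of_naf_ne_zero hp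
  rcases Finset.mem_union.mp hv with hv | hv
  · exact Finset.mem_union_left _ (Finset.mem_Icc.mpr ⟨p.zero_le, by
      have := (Finset.mem_Icc.mp hv).2; omega⟩)
  · obtain ⟨i, -, hi⟩ := Finset.mem_biUnion.mp hv
    obtain ⟨hki, hiw⟩ := Finset.mem_Icc.mp hi
    by_contra hpS
    have hv : (v : ℤ) = ∑ j, c i j * 2 ^ k j + (v - k i : ℕ) := by
      rw [← hk i]; push_cast [hki]; ring
    exact hp (hv ▸ naf_eq_zero_of_notMem_windowUnion hw hb (hc i) (by omega) hpS)

lemma card_windowUnion_le : (windowUnion w b k).card ≤ b + 1 + Fintype.card ι * (w + 1) := by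
  refine (Finset.card_union_le _ _).trans (add_le_add (by simp) ?_)
  refine Finset.card_biUnion_le.trans ?_
  simp [add_assoc]

lemma filter_windowUnion_subset :
    (windowUnion w b k).filter (fun s => s = 0 ∨ s - 1 ∉ windowUnion w b k) ⊆
      insert 0 (Finset.univ.image k) := by
  intro s hs
  obtain ⟨hs, hstart⟩ := Finset.mem_filter.mp hs
  rcases hstart with rfl | hpred
  · exact Finset.mem_insert_self _ _
  rcases Finset.mem_union.mp hs with hs | hs
  · refine absurd (Finset.mem_union_left _ (Finset.mem_Icc.mpr ⟨(s - 1).zero_le, ?_⟩)) hpred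
    exact (Nat.sub_le s 1).trans (Finset.mem_Icc.mp hs).2
  · obtain ⟨i, -, hi⟩ := Finset.mem_biUnion.mp hs
    obtain ⟨hki, hiw⟩ := Finset.mem_Icc.mp hi
    rcases hki.eq_or_lt with rfl | hlt
    · exact Finset.mem_insert_of_mem (Finset.mem_image_of_mem k (Finset.mem_univ i))
    · refine absurd (Finset.mem_union_right (Finset.Icc 0 b) ?_) hpred
      exact Finset.mem_biUnion.mpr
        ⟨i, Finset.mem_univ i, Finset.mem_Icc.mpr ⟨by omega, by omega⟩⟩

lemma card_filter_windowUnion_le :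
    ((windowUnion w b k).filter (fun s => s = 0 ∨ s - 1 ∉ windowUnion w b k)).card ≤
      Fintype.card ι + 1 :=
  (Finset.card_le_card filter_windowUnion_subset).trans <|
    (Finset.card_insert_le _ _).trans (Nat.succ_le_succ Finset.card_image_le)

end WindowUnion

lemma add_mul_le_sq_mul_logb {n w : ℕ} (hn : 1 ≤ n) (hw : w = Nat.log 2 (3 * n) + 1) :
    ((w + 2 + 1 + n * (w + 1) : ℕ) : ℝ) ≤ ((n : ℝ) + 1) ^ 2 * (Real.logb 2 n + 2) := by
  subst hw
  -- the estimate `log₂ (3n) ≤ log₂ n + 2` used for `n ≥ 2` is too weak for `n = 1`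
  rcases hn.eq_or_lt with rfl | hn2
  · have : Nat.log 2 3 = 1 := by decide
    simp [this]; norm_num
  set L := Nat.log 2 n
  have hlog : Nat.log 2 (3 * n) ≤ L + 2 :=
    calc Nat.log 2 (3 * n) ≤ Nat.log 2 (n * 2 * 2) := Nat.log_mono_right (by omega)
      _ = L + 2 := by
        rw [Nat.log_mul_base one_lt_two (by omega), Nat.log_mul_base one_lt_two (by omega)]
  have hnat : Nat.log 2 (3 * n) + 1 + 2 + 1 + n * (Nat.log 2 (3 * n) + 1 + 1) ≤
      (n + 1) ^ 2 * (L + 2) :=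
    calc Nat.log 2 (3 * n) + 1 + 2 + 1 + n * (Nat.log 2 (3 * n) + 1 + 1)
        ≤ L + 6 + n * (L + 4) := by
          have := Nat.mul_le_mul_left n (show Nat.log 2 (3 * n) + 1 + 1 ≤ L + 4 by omega)
          omega
      _ ≤ (n + 1) ^ 2 * (L + 2) := by nlinarith [Nat.zero_le (n * L), Nat.zero_le (n * n * L)]
  calc ((Nat.log 2 (3 * n) + 1 + 2 + 1 + n * (Nat.log 2 (3 * n) + 1 + 1) : ℕ) : ℝ)
      ≤ ((n : ℝ) + 1) ^ 2 * (L + 2) := by exact_mod_cast hnat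
    _ ≤ ((n : ℝ) + 1) ^ 2 * (Real.logb 2 n + 2) := by
      gcongr; exact_mod_cast Real.natLog_le_logb n 2

/-- For every power circuit `(Π,δ_Π)` with `n ≥ 1` nodes and every
marking `M` on `Π` there exist a reduced power circuit `(Γ,δ)` and a compact marking
`M̃` on `Γ` with `ε(M̃) = ε(M)`, such that `Γ` has at most `n + 1` maximal chains and
`|Γ| ≤ (n+1)² · (log₂ n + 2)`. -/
theorem power_circuit_reduction (Pi : PowerCircuit) (hn : 1 ≤ Pi.n)
    (M : Fin Pi.n → ℤ) (hM : Pi.IsMarking M) :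
    ∃ (Γ : PowerCircuit) (Mt : Fin Γ.n → ℤ),
      Γ.Reduced ∧ Γ.IsMarking Mt ∧ Γ.CompactM Mt ∧
      Γ.evalM Mt = Pi.evalM M ∧
      Γ.chainCount ≤ Pi.n + 1 ∧
      (Γ.n : ℝ) ≤ ((Pi.n : ℝ) + 1) ^ 2 * (Real.logb 2 (Pi.n : ℝ) + 2) := by
  obtain ⟨k, hε, hk⟩ := Pi.exists_exponents
  set w := Nat.log 2 (3 * Pi.n) + 1 with hw_def
  have hw : 3 * Fintype.card (Fin Pi.n) < 2 ^ w := by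
    simpa using Nat.lt_pow_succ_log_self one_lt_two (3 * Pi.n)
  have hb : 3 * w ≤ 2 ^ (w + 2) := by
    have := Nat.lt_two_pow_self (n := w)
    rw [pow_add]; omega
  have hδ : ∀ P Q, |Pi.δ P Q| ≤ 1 := fun P Q =>
    Int.abs_le_one_iff.mpr (by have := Pi.δ_range P Q; tauto)
  have hM' : ∀ P, |M P| ≤ 1 := fun P => Int.abs_le_one_iff.mpr (by have := hM P; tauto)
  set S := windowUnion w (w + 2) k
  have hS : IsNafClosed S := isNafClosed_windowUnion hw hb hδ hk
  set x : ℤ := ∑ P, M P * 2 ^ k P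
  refine ⟨PowerCircuit.ofNafClosed S hS, fun i => Int.naf x (S.orderEmbOfFin rfl i),
    PowerCircuit.reduced_ofNafClosed hS, PowerCircuit.isMarking_ofNafClosed hS x,
    PowerCircuit.compactM_ofNafClosed hS x, ?_, ?_, ?_⟩
  · rw [PowerCircuit.evalM_ofNafClosed hS fun p => mem_windowUnion_of_naf_sum_ne_zero hw hb hM',
      PowerCircuit.evalM]
    simp [hε]
  · simpa using (PowerCircuit.chainCount_ofNafClosed_le hS).trans card_filter_windowUnion_le
  · have hcard := card_windowUnion_le (w := w) (b := w + 2) (k := k)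
    rw [Fintype.card_fin] at hcard
    exact (Nat.cast_le.mpr hcard).trans (add_mul_le_sq_mul_logb hn hw_def)
end

section
/- Let r, s ∈ ℤ[1/2], m, n, k ∈ ℤ, and let x ∈ H with b·x·b⁻¹ = ι(0,k). Then the element w = b·ι(r,m)·b·x·b⁻¹·ι(s,n)·b⁻¹ of H lies in the image of ι if and only if r + 2^{m+k}·s ∈ ℤ and m + n + k = 0; and in that case w = ι(0, r + 2^{−n}·s). -/
/-- The dyadic rationals `ℤ[1/2] = {p/2^q : p,q ∈ ℤ}`. -/
def IsDyadic (x : ℚ) : Prop := ∃ p : ℤ, ∃ q : ℕ, x = p / 2 ^ q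

theorem IsDyadic.add {x y : ℚ} (hx : IsDyadic x) (hy : IsDyadic y) :
    IsDyadic (x + y) := by
  obtain ⟨p, q, rfl⟩ := hx
  obtain ⟨p', q', rfl⟩ := hy
  refine ⟨p * 2 ^ q' + p' * 2 ^ q, q + q', ?_⟩
  have h2 : (2 : ℚ) ≠ 0 := two_ne_zero
  push_cast
  rw [pow_add]
  field_simp

theorem IsDyadic.neg {x : ℚ} (hx : IsDyadic x) : IsDyadic (-x) := by
  obtain ⟨p, q, rfl⟩ := hx
  exact ⟨-p, q, by push_cast; ring⟩

theorem IsDyadic.zpow_mul (m : ℤ) {x : ℚ} (hx : IsDyadic x) :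
    IsDyadic ((2 : ℚ) ^ m * x) := by
  obtain ⟨p, q, rfl⟩ := hx
  have h2 : (2 : ℚ) ≠ 0 := two_ne_zero
  rcases Int.eq_nat_or_neg m with ⟨a, rfl | rfl⟩
  · refine ⟨p * 2 ^ a, q, ?_⟩
    rw [zpow_natCast]
    push_cast
    field_simp
  · refine ⟨p, q + a, ?_⟩
    rw [zpow_neg, zpow_natCast, pow_add]
    field_simp

/-- The underlying set of `ℤ[1/2]`. -/
abbrev Dy : Type := {x : ℚ // IsDyadic x}

/-- The carrier `ℤ[1/2] × ℤ` of the Baumslag–Solitar group `BS(1,2) = ℤ[1/2] ⋊ ℤ`. -/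
def BS12 : Type := Dy × ℤ

/-- The group structure of the semidirect product `ℤ[1/2] ⋊ ℤ`, where `n ∈ ℤ` acts on
`ℤ[1/2]` by `x ↦ 2^n·x`: multiplication `(r,m)·(s,n) = (r + 2^m·s, m+n)`. -/
instance : Group BS12 where
  mul g h := (⟨g.1.1 + 2 ^ g.2 * h.1.1, g.1.2.add (IsDyadic.zpow_mul g.2 h.1.2)⟩,
    g.2 + h.2)
  one := (⟨0, 0, 0, by norm_num⟩, 0)
  inv g := (⟨-((2 : ℚ) ^ (-g.2) * g.1.1), (IsDyadic.zpow_mul (-g.2) g.1.2).neg⟩, -g.2)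
  mul_assoc g h k := by
    show Prod.mk _ _ = Prod.mk _ _
    have h2 : (2 : ℚ) ≠ 0 := two_ne_zero
    refine Prod.ext ?_ ?_
    · apply Subtype.ext
      show (g.1.1 + 2 ^ g.2 * h.1.1) + 2 ^ (g.2 + h.2) * k.1.1
        = g.1.1 + 2 ^ g.2 * (h.1.1 + 2 ^ h.2 * k.1.1)
      rw [zpow_add₀ h2]
      ring
    · show g.2 + h.2 + k.2 = g.2 + (h.2 + k.2)
      ring
  one_mul g := by
    show Prod.mk _ _ = g
    refine Prod.ext ?_ ?_
    · apply Subtype.ext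
      show (0 : ℚ) + 2 ^ (0 : ℤ) * g.1.1 = g.1.1
      simp
    · show (0 : ℤ) + g.2 = g.2
      simp
  mul_one g := by
    show Prod.mk _ _ = g
    refine Prod.ext ?_ ?_
    · apply Subtype.ext
      show g.1.1 + 2 ^ g.2 * (0 : ℚ) = g.1.1
      simp
    · show g.2 + (0 : ℤ) = g.2
      simp
  inv_mul_cancel g := by
    show Prod.mk _ _ = Prod.mk _ _
    refine Prod.ext ?_ ?_
    · apply Subtype.ext
      show -((2 : ℚ) ^ (-g.2) * g.1.1) + 2 ^ (-g.2) * g.1.1 = 0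
      ring
    · show -g.2 + g.2 = 0
      ring

/-- The element `(r, m)` of `ℤ[1/2] ⋊ ℤ`. -/
def BS12.mk (r : Dy) (m : ℤ) : BS12 := (r, m)

/-- `0 ∈ ℤ[1/2]`. -/
def Dy.zero : Dy := ⟨0, 0, 0, by norm_num⟩

/-- An integer, viewed as an element of `ℤ[1/2]`. -/
def Dy.ofInt (z : ℤ) : Dy := ⟨(z : ℚ), z, 0, by norm_num⟩

/-- The subgroup `A = {(q,0) : q ∈ ℤ}` of `ℤ[1/2] ⋊ ℤ`. -/
def subA : Subgroup BS12 where
  carrier := {g | (∃ z : ℤ, g.1.1 = (z : ℚ)) ∧ g.2 = 0}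
  one_mem' := ⟨⟨0, show (0 : ℚ) = ((0 : ℤ) : ℚ) by norm_num⟩, rfl⟩
  mul_mem' := by
    rintro g h ⟨⟨z1, hz1⟩, hg2⟩ ⟨⟨z2, hz2⟩, hh2⟩
    constructor
    · refine ⟨z1 + z2, ?_⟩
      show g.1.1 + 2 ^ g.2 * h.1.1 = ((z1 + z2 : ℤ) : ℚ)
      rw [hz1, hz2, hg2, zpow_zero]
      push_cast
      ring
    · show g.2 + h.2 = 0
      rw [hg2, hh2]
      ring
  inv_mem' := by
    rintro g ⟨⟨z, hz⟩, hg2⟩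
    constructor
    · refine ⟨-z, ?_⟩
      show -((2 : ℚ) ^ (-g.2) * g.1.1) = ((-z : ℤ) : ℚ)
      rw [hz, hg2]
      push_cast
      ring
    · show -g.2 = 0
      rw [hg2]
      ring

/-- The subgroup `B = {(0,k) : k ∈ ℤ}` of `ℤ[1/2] ⋊ ℤ`. -/
def subB : Subgroup BS12 where
  carrier := {g | g.1.1 = 0}
  one_mem' := show (0 : ℚ) = 0 from rfl
  mul_mem' := by
    intro g h hg hh
    show g.1.1 + 2 ^ g.2 * h.1.1 = 0
    rw [hg, hh]
    ring
  inv_mem' := by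
    intro g hg
    show -((2 : ℚ) ^ (-g.2) * g.1.1) = 0
    rw [hg]
    ring

/-- The isomorphism `φ : A → B`, `(q,0) ↦ (0,q)`. -/
def phiAB : subA ≃* subB where
  toFun g := ⟨(Dy.zero, g.1.1.1.num), rfl⟩
  invFun g := ⟨(Dy.ofInt g.1.2, 0), ⟨⟨g.1.2, rfl⟩, rfl⟩⟩
  left_inv g := by
    obtain ⟨⟨z, hz⟩, hg2⟩ := g.2
    apply Subtype.ext
    refine Prod.ext ?_ ?_
    · apply Subtype.ext
      show ((g.1.1.1.num : ℤ) : ℚ) = g.1.1.1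
      rw [hz, Rat.num_intCast]
    · exact hg2.symm
  right_inv g := by
    have hg : g.1.1.1 = 0 := g.2
    apply Subtype.ext
    refine Prod.ext ?_ ?_
    · apply Subtype.ext
      show (0 : ℚ) = g.1.1.1
      exact hg.symm
    · show (Dy.ofInt g.1.2).1.num = g.1.2
      show ((g.1.2 : ℤ) : ℚ).num = g.1.2
      rw [Rat.num_intCast]
  map_mul' g h := by
    obtain ⟨⟨z1, hz1⟩, hg2⟩ := g.2
    obtain ⟨⟨z2, hz2⟩, hh2⟩ := h.2
    apply Subtype.ext
    refine Prod.ext ?_ ?_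
    · apply Subtype.ext
      show (0 : ℚ) = (0 : ℚ) + 2 ^ ((g.1.1.1.num : ℤ)) * 0
      ring
    · show (g.1.1.1 + 2 ^ g.1.2 * h.1.1.1).num = g.1.1.1.num + h.1.1.1.num
      rw [hz1, hz2, hg2, zpow_zero, one_mul, ← Int.cast_add, Rat.num_intCast,
        Rat.num_intCast, Rat.num_intCast]

/-- The Baumslag group as the HNN extension `H = HNN(G, A, B, φ)` of
`G = ℤ[1/2] ⋊ ℤ`, with stable letter `b` satisfying `b·g·b⁻¹ = φ(g)` for `g ∈ A`. -/
abbrev BaumslagH : Type := HNNExtension BS12 subA subB phiAB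

/-- The stable letter `b` of the HNN extension. -/
def bH : BaumslagH := HNNExtension.t

/-- The canonical embedding `ι : G → H` of the base group. -/
def iH : BS12 →* BaumslagH := HNNExtension.of

/-!
Since `b x b⁻¹ = ι(0,k)`, the element `w` equals `b ι(g₀) b⁻¹` with
`g₀ = (r,m)(0,k)(s,n) = (r + 2^{m+k} s, m + k + n)`. By Britton's lemma a conjugate `b ι(g) b⁻¹`
lies in `ι(G)` exactly when `g ∈ A`, and then it is `ι(φ g)`.
-/

namespace HNNExtension

open NormalWord

variable {G : Type*} [Group G] {A B : Subgroup G} (φ : A ≃* B)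

theorem t_mul_of_mul_inv_t_mem_range_iff (g : G) :
    t * of g * t⁻¹ ∈ (of : G →* HNNExtension G A B φ).range ↔ g ∈ A := by
  refine ⟨fun hmem => ?_, fun hg => ⟨φ ⟨g, hg⟩, equiv_eq_conj (φ := φ) ⟨g, hg⟩⟩⟩
  -- for `g ∉ A` the word `t g t⁻¹` is reduced, so Britton's lemma keeps it out of `G`
  by_contra hg
  let w : ReducedWord G A B :=
    { head := 1
      toList := [(1, g), (-1, 1)]
      chain := List.isChain_pair.2 fun h => absurd h hg }
  have hprod : w.prod φ = t * of g * t⁻¹ := by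
    simp [w, ReducedWord.prod, mul_assoc]
  have hnil := ReducedWord.toList_eq_nil_of_mem_of_range φ w (hprod ▸ hmem)
  simp [w] at hnil

end HNNExtension

namespace BS12

@[simp]
theorem mul_fst_val (g h : BS12) : ((g * h).1 : ℚ) = g.1 + 2 ^ g.2 * h.1 := rfl

@[simp]
theorem mul_snd (g h : BS12) : (g * h).2 = g.2 + h.2 := rfl

@[simp]
theorem mk_fst (r : Dy) (m : ℤ) : (mk r m).1 = r := rfl

@[simp]
theorem mk_snd (r : Dy) (m : ℤ) : (mk r m).2 = m := rfl

end BS12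

@[simp]
theorem Dy.zero_val : (Dy.zero : ℚ) = 0 := rfl

theorem mem_subA_iff (g : BS12) : g ∈ subA ↔ (∃ z : ℤ, (g.1 : ℚ) = z) ∧ g.2 = 0 := Iff.rfl

theorem phiAB_apply_of_val_eq_intCast (a : subA) (z : ℤ) (h : (a.1.1 : ℚ) = z) :
    (phiAB a : BS12) = BS12.mk Dy.zero z := by
  show (Dy.zero, (a.1.1 : ℚ).num) = (Dy.zero, z)
  rw [h, Rat.num_intCast]

theorem mk_mul_mk_zero_mul_mk_fst_val (r s : Dy) (m k n : ℤ) :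
    ((BS12.mk r m * BS12.mk Dy.zero k * BS12.mk s n).1 : ℚ) = r + 2 ^ (m + k) * s := by
  simp [zpow_add₀ (two_ne_zero : (2 : ℚ) ≠ 0), mul_assoc]

/-- Let `r, s ∈ ℤ[1/2]`, `m, n, k ∈ ℤ`, and `x ∈ H` with
`b·x·b⁻¹ = ι(0,k)`.  Then `w = b·ι(r,m)·b·x·b⁻¹·ι(s,n)·b⁻¹` lies in the image of `ι`
iff `r + 2^{m+k}·s ∈ ℤ` and `m + n + k = 0`; and in that case
`w = ι(0, r + 2^{−n}·s)`. -/
theorem britton_case_bb (r s : Dy) (m n k : ℤ) (x : BaumslagH)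
    (hx : bH * x * bH⁻¹ = iH (BS12.mk Dy.zero k)) :
    ((∃ g : BS12,
        bH * iH (BS12.mk r m) * bH * x * bH⁻¹ * iH (BS12.mk s n) * bH⁻¹ = iH g)
      ↔ ((∃ z : ℤ, (r : ℚ) + 2 ^ (m + k) * (s : ℚ) = (z : ℚ)) ∧ m + n + k = 0))
    ∧ ∀ z : ℤ, ((z : ℚ) = (r : ℚ) + 2 ^ (-n) * (s : ℚ)) →
        ((∃ z' : ℤ, (r : ℚ) + 2 ^ (m + k) * (s : ℚ) = (z' : ℚ)) ∧ m + n + k = 0) →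
        bH * iH (BS12.mk r m) * bH * x * bH⁻¹ * iH (BS12.mk s n) * bH⁻¹
          = iH (BS12.mk Dy.zero z) := by
  set g₀ := BS12.mk r m * BS12.mk Dy.zero k * BS12.mk s n
  have hw : bH * iH (BS12.mk r m) * bH * x * bH⁻¹ * iH (BS12.mk s n) * bH⁻¹
      = bH * iH g₀ * bH⁻¹ := by
    calc _ = bH * iH (BS12.mk r m) * (bH * x * bH⁻¹) * iH (BS12.mk s n) * bH⁻¹ := by group
      _ = bH * iH g₀ * bH⁻¹ := by simp only [hx, g₀, map_mul, mul_assoc]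
  have hg₀ : g₀ ∈ subA ↔
      (∃ z : ℤ, (r : ℚ) + 2 ^ (m + k) * (s : ℚ) = z) ∧ m + n + k = 0 := by
    rw [mem_subA_iff, mk_mul_mk_zero_mul_mk_fst_val]
    simp only [g₀, BS12.mul_snd, BS12.mk_snd, add_right_comm m k n]
  refine ⟨?_, fun z hz hcond => ?_⟩
  · simp only [hw, eq_comm (a := bH * iH g₀ * bH⁻¹), ← MonoidHom.mem_range]
    exact (HNNExtension.t_mul_of_mul_inv_t_mem_range_iff phiAB g₀).trans hg₀
  · have hA := hg₀.2 hcond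
    rw [hw]
    refine (HNNExtension.equiv_eq_conj (φ := phiAB) ⟨g₀, hA⟩).symm.trans
      (congrArg iH (phiAB_apply_of_val_eq_intCast _ z ?_))
    rw [mk_mul_mk_zero_mul_mk_fst_val, hz, show m + k = -n by omega]
end

section
/- Let r, s ∈ ℤ[1/2] with r ≠ 0 and s ≠ 0, let m, n, k ∈ ℤ, and let x ∈ H with b·x·b⁻¹ = ι(0,k). Then the element w = b⁻¹·ι(r,m)·b·x·b⁻¹·ι(s,n)·b of H lies in the image of ι if and only if r + 2^{m+k}·s = 0; and in that case w = ι(m + k + n, 0) (equivalently, ι(n + log₂(−r/s), 0), noting that −r/s = 2^{m+k} under the condition). -/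
/-!
Since `b x b⁻¹ = ι(0,k)`, the word collapses to `b⁻¹ ι(g) b` with
`g = (r,m)(0,k)(s,n) = (r + 2^{m+k} s, m + k + n)`. By Britton's lemma, `b⁻¹ ι(g) b` lies in
`ι(G)` exactly when `g ∈ B`, i.e. when its first coordinate vanishes, and then it equals
`ι(φ⁻¹ g) = ι(m + k + n, 0)`.
-/

theorem inv_mul_mul_mul_mul_inv_mul_mul_eq {M : Type*} [Group M] {b x c : M}
    (hx : b * x * b⁻¹ = c) (p q : M) :
    b⁻¹ * p * b * x * b⁻¹ * q * b = b⁻¹ * (p * c * q) * b := by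
  rw [← hx]
  group

namespace HNNExtension

open NormalWord

variable {G : Type*} [Group G] {A B : Subgroup G} {φ : A ≃* B}

theorem inv_t_mul_of_mul_t_eq_of_symm (b : B) :
    (t⁻¹ * of (b : G) * t : HNNExtension G A B φ) = of (φ.symm b : G) :=
  (equiv_symm_eq_conj b).symm

theorem exists_inv_t_mul_of_mul_t_eq_of_iff (g : G) :
    (∃ g' : G, (t⁻¹ * of g * t : HNNExtension G A B φ) = of g') ↔ g ∈ B := by
  refine ⟨fun ⟨g', hg'⟩ => ?_, fun hg => ⟨_, inv_t_mul_of_mul_t_eq_of_symm ⟨g, hg⟩⟩⟩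
  by_contra hgB
  let w : ReducedWord G A B :=
    { head := 1
      toList := [(-1, g), (1, 1)]
      chain := List.isChain_pair.2 fun hg => (hgB (by simpa using hg)).elim }
  have hw : w.prod φ = t⁻¹ * of g * t := by
    simp [w, ReducedWord.prod, mul_assoc]
  have := ReducedWord.toList_eq_nil_of_mem_of_range φ w ⟨g', by rw [hw, hg']⟩
  simp [w] at this

end HNNExtension

theorem BS12.mk_mul_mk_zero_mul_mk_mem_subB_iff (r s : Dy) (m k n : ℤ) :
    BS12.mk r m * BS12.mk Dy.zero k * BS12.mk s n ∈ subB
      ↔ (r : ℚ) + 2 ^ (m + k) * (s : ℚ) = 0 := by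
  show (r : ℚ) + 2 ^ m * 0 + 2 ^ (m + k) * (s : ℚ) = 0 ↔ _
  rw [mul_zero, add_zero]

theorem phiAB_symm_apply (g : subB) : (phiAB.symm g : BS12) = BS12.mk (Dy.ofInt g.1.2) 0 := rfl

theorem britton_case_binv_b_general (r s : Dy)
    (m n k : ℤ) (x : BaumslagH)
    (hx : bH * x * bH⁻¹ = iH (BS12.mk Dy.zero k)) :
    ((∃ g : BS12,
        bH⁻¹ * iH (BS12.mk r m) * bH * x * bH⁻¹ * iH (BS12.mk s n) * bH = iH g)
      ↔ (r : ℚ) + 2 ^ (m + k) * (s : ℚ) = 0)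
    ∧ ((r : ℚ) + 2 ^ (m + k) * (s : ℚ) = 0 →
        bH⁻¹ * iH (BS12.mk r m) * bH * x * bH⁻¹ * iH (BS12.mk s n) * bH
          = iH (BS12.mk (Dy.ofInt (m + k + n)) 0)) := by
  set g := BS12.mk r m * BS12.mk Dy.zero k * BS12.mk s n
  have hw : bH⁻¹ * iH (BS12.mk r m) * bH * x * bH⁻¹ * iH (BS12.mk s n) * bH
      = HNNExtension.t⁻¹ * HNNExtension.of g * HNNExtension.t := by
    rw [inv_mul_mul_mul_mul_inv_mul_mul_eq hx, ← map_mul, ← map_mul]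
    rfl
  rw [hw, ← BS12.mk_mul_mk_zero_mul_mk_mem_subB_iff]
  refine ⟨HNNExtension.exists_inv_t_mul_of_mul_t_eq_of_iff g, fun hg => ?_⟩
  rw [HNNExtension.inv_t_mul_of_mul_t_eq_of_symm ⟨g, hg⟩, phiAB_symm_apply]
  rfl

/-- Let `r, s ∈ ℤ[1/2]` with `r ≠ 0 ≠ s`, `m, n, k ∈ ℤ`, and
`x ∈ H` with `b·x·b⁻¹ = ι(0,k)`.  Then `w = b⁻¹·ι(r,m)·b·x·b⁻¹·ι(s,n)·b` lies in the
image of `ι` iff `r + 2^{m+k}·s = 0`; and in that case `w = ι(m + k + n, 0)`. -/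
theorem britton_case_binv_b (r s : Dy) (hr : (r : ℚ) ≠ 0) (hs : (s : ℚ) ≠ 0)
    (m n k : ℤ) (x : BaumslagH)
    (hx : bH * x * bH⁻¹ = iH (BS12.mk Dy.zero k)) :
    ((∃ g : BS12,
        bH⁻¹ * iH (BS12.mk r m) * bH * x * bH⁻¹ * iH (BS12.mk s n) * bH = iH g)
      ↔ (r : ℚ) + 2 ^ (m + k) * (s : ℚ) = 0)
    ∧ ((r : ℚ) + 2 ^ (m + k) * (s : ℚ) = 0 →
        bH⁻¹ * iH (BS12.mk r m) * bH * x * bH⁻¹ * iH (BS12.mk s n) * bH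
          = iH (BS12.mk (Dy.ofInt (m + k + n)) 0)) :=
  britton_case_binv_b_general r s m n k x hx
end
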